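/- arXiv:1603.01230 — 3 statements merged into one kernel-verified Lean document; each statement's English description precedes it below -/
import Mathlib

section
/- For all x ∈ ℝⁿ, t > 0, 1 < r < ∞, and every locally r-integrable function f, the L^r average of the centered Hardy–Littlewood maximal function Mf over the ball B(x,t) is bounded by a constant (depending only on n and r) times the sum of the L^r average of |f| over B(x,2t) and the value at x of the uncentered maximal function applied to the function z ↦ average of |f| over B(z,t). -/
open MeasureTheory Metric Set ENNReal
open scoped NNReal

noncomputable section

abbrev Rn (n : ℕ) := EuclideanSpace ℝ (Fin n)

variable {n : ℕ}

/-- `L^r` average of an `ℝ≥0∞`-valued function over a ball. -/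
def ballAvg (r : ℝ) (g : Rn n → ℝ≥0∞) (x : Rn n) (t : ℝ) : ℝ≥0∞ :=
  ((volume (ball x t))⁻¹ * ∫⁻ y in ball x t, (g y) ^ r) ^ (1 / r)

/-- Centered Hardy–Littlewood maximal operator. -/
def maximal (f : Rn n → ℝ) (x : Rn n) : ℝ≥0∞ :=
  ⨆ (τ : ℝ) (_ : 0 < τ), (volume (ball x τ))⁻¹ * ∫⁻ y in ball x τ, (‖f y‖₊ : ℝ≥0∞)

/-- Uncentered Hardy–Littlewood maximal operator of an `ℝ≥0∞`-valued function. -/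
def umaximal (g : Rn n → ℝ≥0∞) (x : Rn n) : ℝ≥0∞ :=
  ⨆ (z : Rn n) (τ : ℝ) (_ : 0 < τ) (_ : x ∈ ball z τ),
    (volume (ball z τ))⁻¹ * ∫⁻ y in ball z τ, g y

/-- Conical square functional `A_r` (with the `dy dt / t^{n+1}` measure). -/
def conical (r : ℝ) (G : Rn n → ℝ → ℝ≥0∞) (x : Rn n) : ℝ≥0∞ :=
  (∫⁻ t in Ioi (0 : ℝ),
      (∫⁻ y in ball x t, (G y t) ^ r) * ENNReal.ofReal (t ^ (-(n : ℝ) - 1))) ^ (1 / r)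

/-- Tent space quasinorm `‖G‖_{T^q_r} = ‖A_r G‖_{L^q}`. -/
def tentNorm (q r : ℝ) (G : Rn n → ℝ → ℝ≥0∞) : ℝ≥0∞ :=
  (∫⁻ x, (conical r G x) ^ q) ^ (1 / q)

def enn (F : Rn n → ℝ → ℝ) : Rn n → ℝ → ℝ≥0∞ := fun y t => (‖F y t‖₊ : ℝ≥0∞)

/-- Vertical square functional `V_r`. -/
def vertical (r : ℝ) (G : Rn n → ℝ → ℝ≥0∞) (x : Rn n) : ℝ≥0∞ :=
  (∫⁻ t in Ioi (0 : ℝ), (G x t) ^ r * ENNReal.ofReal t⁻¹) ^ (1 / r)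

/-- Tent over the ball `B(x₀,ρ)`: points `(x,t)` with `t ≤ dist(x, ℝⁿ ∖ B)`. -/
def tent (x₀ : Rn n) (ρ : ℝ) : Set (Rn n × ℝ) :=
  {p | 0 < p.2 ∧ p.2 ≤ infDist p.1 (ball x₀ ρ)ᶜ}

/-- `∬_S |M(x,t)|^r dx dt/t`. -/
def tentInt (r : ℝ) (M : Rn n → ℝ → ℝ) (S : Set (Rn n × ℝ)) : ℝ≥0∞ :=
  ∫⁻ t in Ioi (0 : ℝ),
    (∫⁻ y, S.indicator (fun p => (‖M p.1 p.2‖₊ : ℝ≥0∞) ^ r) (y, t)) * ENNReal.ofReal t⁻¹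

/-- Maximal truncated singular integral `T_*`. -/
def tstar (K : Rn n → Rn n → ℝ) (f : Rn n → ℝ) (x : Rn n) : ℝ≥0∞ :=
  ⨆ (ε : ℝ) (_ : 0 < ε), (‖∫ y in {y | ε < dist x y}, K x y * f y‖₊ : ℝ≥0∞)

def rieszGamma (n : ℕ) (α : ℝ) : ℝ :=
  Real.pi ^ ((n : ℝ) / 2) * 2 ^ α * Real.Gamma (α / 2) / Real.Gamma (((n : ℝ) - α) / 2)

/-- Riesz potential of an `ℝ≥0∞`-valued function. -/
def rieszPot (α : ℝ) (g : Rn n → ℝ≥0∞) (x : Rn n) : ℝ≥0∞ :=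
  (ENNReal.ofReal (rieszGamma n α))⁻¹ * ∫⁻ z, g z * ENNReal.ofReal (dist x z ^ (α - n))

/-- Fractional maximal function `M_α f(x) = sup_τ |B(x,τ)|^{α/n} ⨍_{B(x,τ)} |f|`. -/
def fracMax (α : ℝ) (f : Rn n → ℝ) (x : Rn n) : ℝ≥0∞ :=
  ⨆ (τ : ℝ) (_ : 0 < τ),
    (volume (ball x τ)) ^ (α / n) *
      ((volume (ball x τ))⁻¹ * ∫⁻ y in ball x τ, (‖f y‖₊ : ℝ≥0∞))

/-- `T^q_r` atom. -/
def IsTentAtom (q r : ℝ) (A : Rn n → ℝ → ℝ) : Prop :=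
  ∃ (x₀ : Rn n) (ρ : ℝ), 0 < ρ ∧ (∀ y t, A y t ≠ 0 → (y, t) ∈ tent x₀ ρ) ∧
    (tentInt r A Set.univ) ^ (1 / r) ≤ (volume (ball x₀ ρ)) ^ (1 / r - 1 / q)

/-- `𝔗^q_r` atom: a `T^q_r` atom with vanishing mean in `x` for a.e. `t > 0`. -/
def IsFrakAtom (q r : ℝ) (A : Rn n → ℝ → ℝ) : Prop :=
  IsTentAtom q r A ∧ ∀ᵐ t ∂(volume.restrict (Ioi (0 : ℝ))), (∫ x, A x t) = 0

/-- `𝔗^q_r` quasinorm via atomic decompositions into `𝔗^q_r` atoms. -/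
def frakNorm (q r : ℝ) (F : Rn n → ℝ → ℝ) : ℝ≥0∞ :=
  ⨅ (d : {p : (ℕ → ℝ) × (ℕ → Rn n → ℝ → ℝ) //
      (∀ i, IsFrakAtom q r (p.2 i)) ∧ ∀ y t, F y t = ∑' i, p.1 i * p.2 i y t}),
    ENNReal.ofReal ((∑' i, |d.1.1 i| ^ q) ^ (1 / q))

/-- Slice-space quasinorm `‖f‖_{(E^p_r)_t}`. -/
def sliceNorm (p r t : ℝ) (f : Rn n → ℝ) : ℝ≥0∞ :=
  (∫⁻ x, ((volume (ball x t))⁻¹ * ∫⁻ y in ball x t, (‖f y‖₊ : ℝ≥0∞) ^ r) ^ (p / r)) ^ (1 / p)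

def iMap (t : ℝ) (f : Rn n → ℝ) : Rn n → ℝ → ℝ :=
  fun x s => if s ∈ Icc t (Real.exp 1 * t) then f x else 0

def piMap (t : ℝ) (G : Rn n → ℝ → ℝ) : Rn n → ℝ :=
  fun x => ∫ s in Ioc t (Real.exp 1 * t), G x s / s

/-!
Fix `y ∈ B(x,t)`. Averages of `|f|` over `B(y,τ)` with `τ ≤ t` only see `f` on `B(x,2t)`, so they
are bounded by the (truncated) maximal function of `|f| 1_{B(x,2t)}`; its `L^r` norm is controlled
by the Hardy–Littlewood maximal inequality, which follows from Vitali's covering lemma, a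
truncation of `f` at height `s/2` and the layer-cake formula. For `τ > t`, Fubini gives
`∫_{B(y,τ)} |f| ≤ ∫_{B(y,τ+t)} ⨍_{B(z,t)} |f| dz`, and `B(y,τ+t)` is a ball of comparable volume
containing `x`, so these averages are at most `2ⁿ` times the uncentered maximal function at `x`.
Minkowski's inequality on the normalized ball `B(x,t)` combines the two bounds.
-/

open Module

theorem lowerSemicontinuous_measure_ball {X : Type*} [PseudoMetricSpace X] [MeasurableSpace X]
    (μ : Measure X) (τ : ℝ) : LowerSemicontinuous fun x => μ (ball x τ) := by
  intro x c (hc : c < μ (ball x τ))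
  set δ : ℕ → ℝ := fun k => 1 / (k + 1)
  have hδ : ∀ k, 0 < δ k := fun k => Nat.one_div_pos_of_nat
  have hunion : ball x τ = ⋃ k, ball x (τ - δ k) := by
    ext y
    simp only [mem_iUnion, mem_ball]
    refine ⟨fun hy => ?_, fun ⟨k, hk⟩ => by linarith [hδ k]⟩
    obtain ⟨k, hk⟩ := exists_nat_one_div_lt (sub_pos.2 hy)
    exact ⟨k, by linarith⟩
  have hmono : Monotone fun k => ball x (τ - δ k) := fun i j hij =>
    ball_subset_ball (sub_le_sub_left (Nat.one_div_le_one_div hij) τ)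
  rw [hunion, hmono.measure_iUnion, lt_iSup_iff] at hc
  obtain ⟨k, hk⟩ := hc
  filter_upwards [ball_mem_nhds x (hδ k)] with x' hx'
  refine hk.trans_le (measure_mono (ball_subset_ball' ?_))
  rw [mem_ball, dist_comm] at hx'
  linarith

section LayerCake

variable {α : Type*} [MeasurableSpace α] {μ : Measure α}

-- The real-valued layer-cake formula applies when `F < ∞` a.e.; otherwise both sides are `∞`.
theorem lintegral_rpow_eq_lintegral_meas_lt_mul_ennreal {F : α → ℝ≥0∞} (hF : AEMeasurable F μ)
    {p : ℝ} (hp : 1 ≤ p) :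
    ∫⁻ x, F x ^ p ∂μ =
      ENNReal.ofReal p * ∫⁻ s in Ioi (0 : ℝ), μ {x | ENNReal.ofReal s < F x} *
        ENNReal.ofReal (s ^ (p - 1)) := by
  have hp0 : 0 < p := by linarith
  by_cases hinf : μ {x | F x = ∞} = 0
  · have hfin : ∀ᵐ x ∂μ, F x ≠ ∞ := by simpa [ae_iff] using hinf
    have hF_eq : ∀ᵐ x ∂μ, F x ^ p = ENNReal.ofReal ((F x).toReal ^ p) := by
      filter_upwards [hfin] with x hx
      rw [← ENNReal.ofReal_rpow_of_nonneg toReal_nonneg hp0.le, ofReal_toReal hx]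
    rw [lintegral_congr_ae hF_eq, lintegral_rpow_eq_lintegral_meas_lt_mul μ
      (ae_of_all _ fun _ => toReal_nonneg) hF.ennreal_toReal hp0]
    congr 1
    refine setLIntegral_congr_fun measurableSet_Ioi fun s hs => ?_
    congr 1
    refine measure_congr ?_
    filter_upwards [hfin] with x hx
    exact propext (ofReal_lt_iff_lt_toReal (le_of_lt hs) hx).symm
  · have hlhs : ∫⁻ x, F x ^ p ∂μ = ∞ := by
      refine top_unique ?_
      calc ∞ = ∞ * μ {x | ∞ ≤ F x ^ p} := by
            simp [ENNReal.rpow_eq_top_iff, hp0, hp0.not_gt, hinf]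
        _ ≤ ∫⁻ x, F x ^ p ∂μ := mul_meas_ge_le_lintegral₀ (hF.pow_const p) ∞
    have hrhs : ∫⁻ s in Ioi (0 : ℝ), μ {x | ENNReal.ofReal s < F x} *
        ENNReal.ofReal (s ^ (p - 1)) = ∞ := by
      refine top_unique ?_
      calc ∞ = ∫⁻ s in Ioi (1 : ℝ), μ {x | F x = ∞} := by simp [ENNReal.mul_top hinf]
        _ ≤ ∫⁻ s in Ioi (1 : ℝ), μ {x | ENNReal.ofReal s < F x} * ENNReal.ofReal (s ^ (p - 1)) :=
          setLIntegral_mono' measurableSet_Ioi fun s hs => by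
            rw [← mul_one (μ _)]
            gcongr
            · simp_all
            · exact ENNReal.one_le_ofReal.2 (Real.one_le_rpow (le_of_lt hs) (by linarith))
        _ ≤ _ := lintegral_mono' (Measure.restrict_mono (Ioi_subset_Ioi zero_le_one) le_rfl) le_rfl
    rw [hlhs, hrhs, ENNReal.mul_top (by simpa using hp0)]

theorem integral_rpow_sub_two_mul {p : ℝ} (hp : 1 < p) {a : ℝ} (ha : 0 ≤ a) :
    ∫ s in (0 : ℝ)..2 * a, 2 * s ^ (p - 2) * a = 2 ^ p / (p - 1) * a ^ p := by
  have hp1 : p - 2 + 1 = p - 1 := by ring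
  have hpow : (2 * a) ^ (p - 1) * (2 * a) = 2 ^ p * a ^ p := by
    rw [← Real.rpow_add_one' (by positivity) (by linarith), sub_add_cancel,
      Real.mul_rpow zero_le_two ha]
  rw [intervalIntegral.integral_mul_const, intervalIntegral.integral_const_mul,
    integral_rpow (Or.inl (by linarith)), hp1, Real.zero_rpow (by linarith), sub_zero]
  linear_combination hpow / (p - 1)

theorem setLIntegral_Ioi_mul_ite_le {p : ℝ} (hp : 1 < p) (v : ℝ≥0∞) :
    ∫⁻ s in Ioi (0 : ℝ), (ENNReal.ofReal (s / 2))⁻¹ * ENNReal.ofReal (s ^ (p - 1)) *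
        (if ENNReal.ofReal (s / 2) < v then v else 0) ≤
      ENNReal.ofReal (2 ^ p / (p - 1)) * v ^ p := by
  have hp0 : 0 < p := by linarith
  rcases eq_or_ne v ∞ with rfl | hv
  · rw [ENNReal.top_rpow_of_pos hp0, ENNReal.mul_top (ENNReal.ofReal_pos.2
      (div_pos (by positivity) (sub_pos.2 hp))).ne']
    exact le_top
  set a := v.toReal
  have ha : 0 ≤ a := toReal_nonneg
  have hva : v = ENNReal.ofReal a := (ofReal_toReal hv).symm
  have hpoint : EqOn (fun s => (ENNReal.ofReal (s / 2))⁻¹ * ENNReal.ofReal (s ^ (p - 1)) *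
      (if ENNReal.ofReal (s / 2) < v then v else 0))
      ((Ioo 0 (2 * a)).indicator fun s => ENNReal.ofReal (2 * s ^ (p - 2) * a)) (Ioi 0) := by
    intro s (hs : 0 < s)
    dsimp only
    have hlt : ENNReal.ofReal (s / 2) < v ↔ s ∈ Ioo 0 (2 * a) := by
      rw [hva, ENNReal.ofReal_lt_ofReal_iff_of_nonneg (by positivity)]
      exact ⟨fun h => ⟨hs, by linarith⟩, fun h => by linarith [h.2]⟩
    by_cases h : s ∈ Ioo 0 (2 * a)
    · rw [if_pos (hlt.2 h), indicator_of_mem h, hva, ← ENNReal.ofReal_inv_of_pos (by positivity),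
        ← ENNReal.ofReal_mul (by positivity), ← ENNReal.ofReal_mul (by positivity)]
      congr 1
      rw [show p - 1 = (p - 2) + 1 by ring, Real.rpow_add_one hs.ne']
      field_simp
    · rw [if_neg (mt hlt.1 h), indicator_of_notMem h, mul_zero]
  rw [setLIntegral_congr_fun measurableSet_Ioi hpoint, lintegral_indicator measurableSet_Ioo,
    Measure.restrict_restrict measurableSet_Ioo, inter_eq_self_of_subset_left Ioo_subset_Ioi_self,
    Measure.restrict_congr_set Ioo_ae_eq_Ioc, ← ofReal_integral_eq_lintegral_ofReal,
    ← intervalIntegral.integral_of_le (by positivity), integral_rpow_sub_two_mul hp ha,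
    ENNReal.ofReal_mul (by positivity), hva, ENNReal.ofReal_rpow_of_nonneg ha hp0.le]
  · exact (intervalIntegrable_iff_integrableOn_Ioc_of_le (by positivity)).1
      (((intervalIntegral.intervalIntegrable_rpow' (by linarith)).const_mul 2).mul_const a)
  · filter_upwards [self_mem_ae_restrict measurableSet_Ioc] with s hs
    exact mul_nonneg (mul_nonneg zero_le_two (Real.rpow_nonneg hs.1.le _)) ha

-- Marcinkiewicz-type interpolation: `h` is a weak (1,1) bound for the part of `g` above `s / 2`.
theorem lintegral_rpow_le_of_meas_lt_le [SFinite μ] {F g : α → ℝ≥0∞} (hF : AEMeasurable F μ)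
    (hg : Measurable g) {p : ℝ} (hp : 1 < p) {A : ℝ≥0∞}
    (h : ∀ s : ℝ, 0 < s → μ {x | ENNReal.ofReal s < F x} ≤
      A * (ENNReal.ofReal (s / 2))⁻¹ * ∫⁻ x in {x | ENNReal.ofReal (s / 2) < g x}, g x ∂μ) :
    ∫⁻ x, F x ^ p ∂μ ≤ ENNReal.ofReal (p * (2 ^ p / (p - 1))) * A * ∫⁻ x, g x ^ p ∂μ := by
  set G : ℝ × α → ℝ≥0∞ := fun q =>
    (ENNReal.ofReal (q.1 / 2))⁻¹ * ENNReal.ofReal (q.1 ^ (p - 1)) *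
      (if ENNReal.ofReal (q.1 / 2) < g q.2 then g q.2 else 0)
  have hG : Measurable G := by
    refine Measurable.mul (by fun_prop)
      (Measurable.ite ?_ (hg.comp measurable_snd) measurable_const)
    exact measurableSet_lt (by fun_prop) (hg.comp measurable_snd)
  have hlevel : ∀ s : ℝ, 0 < s → μ {x | ENNReal.ofReal s < F x} * ENNReal.ofReal (s ^ (p - 1)) ≤
      A * ∫⁻ x, G (s, x) ∂μ := fun s hs => by
    have hset : MeasurableSet {x | ENNReal.ofReal (s / 2) < g x} :=
      measurableSet_lt measurable_const hg
    calc μ {x | ENNReal.ofReal s < F x} * ENNReal.ofReal (s ^ (p - 1))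
        ≤ A * (ENNReal.ofReal (s / 2))⁻¹ *
            (∫⁻ x, {x | ENNReal.ofReal (s / 2) < g x}.indicator g x ∂μ) *
              ENNReal.ofReal (s ^ (p - 1)) := by
          rw [lintegral_indicator hset]
          exact mul_le_mul_left (h s hs) _
      _ = A * ∫⁻ x, G (s, x) ∂μ := by
          have hite : Measurable fun x => if ENNReal.ofReal (s / 2) < g x then g x else 0 :=
            Measurable.ite hset hg measurable_const
          simp only [G, lintegral_const_mul _ hite, indicator_apply, mem_ofPred_eq]
          ring
  calc ∫⁻ x, F x ^ p ∂μ
      = ENNReal.ofReal p * ∫⁻ s in Ioi (0 : ℝ), μ {x | ENNReal.ofReal s < F x} *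
          ENNReal.ofReal (s ^ (p - 1)) :=
        lintegral_rpow_eq_lintegral_meas_lt_mul_ennreal hF hp.le
    _ ≤ ENNReal.ofReal p * ∫⁻ s in Ioi (0 : ℝ), A * ∫⁻ x, G (s, x) ∂μ :=
        mul_le_mul_right (setLIntegral_mono' measurableSet_Ioi hlevel) _
    _ = ENNReal.ofReal p * A * ∫⁻ x, (∫⁻ s in Ioi (0 : ℝ), G (s, x)) ∂μ := by
        rw [lintegral_const_mul _ hG.lintegral_prod_right',
          lintegral_lintegral_swap hG.aemeasurable, mul_assoc]
    _ ≤ ENNReal.ofReal p * A * ∫⁻ x, ENNReal.ofReal (2 ^ p / (p - 1)) * g x ^ p ∂μ :=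
        mul_le_mul_right (lintegral_mono fun x => setLIntegral_Ioi_mul_ite_le hp (g x)) _
    _ = ENNReal.ofReal (p * (2 ^ p / (p - 1))) * A * ∫⁻ x, g x ^ p ∂μ := by
        rw [lintegral_const_mul' _ _ ofReal_ne_top, ENNReal.ofReal_mul (by linarith)]
        ring

theorem inv_measure_mul_setLIntegral (s : Set α) (f : α → ℝ≥0∞) :
    (μ s)⁻¹ * ∫⁻ x in s, f x ∂μ = ⨍⁻ x in s, f x ∂μ := by
  rw [setLAverage_eq, ENNReal.div_eq_inv_mul]

theorem setLAverage_const_mul {s : Set α} (c : ℝ≥0∞) {f : α → ℝ≥0∞} (hf : Measurable f) :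
    ⨍⁻ x in s, c * f x ∂μ = c * ⨍⁻ x in s, f x ∂μ := by
  rw [setLAverage_eq, setLAverage_eq, lintegral_const_mul _ hf, mul_div_assoc]

end LayerCake

section MaximalFunction

variable {X : Type*} [PseudoMetricSpace X] [MeasurableSpace X]

-- Bounding the radii by `R` is what makes Vitali's covering lemma applicable.
def truncMaximal (μ : Measure X) (R : ℝ) (g : X → ℝ≥0∞) (x : X) : ℝ≥0∞ :=
  ⨆ (τ : ℝ) (_ : τ ∈ Ioc 0 R), ⨍⁻ y in ball x τ, g y ∂μ

theorem setLAverage_ball_le_truncMaximal {μ : Measure X} {g : X → ℝ≥0∞} {x : X} {τ R : ℝ}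
    (hτ : τ ∈ Ioc 0 R) : ⨍⁻ y in ball x τ, g y ∂μ ≤ truncMaximal μ R g x :=
  le_iSup₂_of_le τ hτ le_rfl

theorem truncMaximal_le_indicator_add [ProperSpace X] {μ : Measure X} [IsFiniteMeasureOnCompacts μ]
    [μ.IsOpenPosMeasure] (g : X → ℝ≥0∞) (R : ℝ) (a : ℝ≥0∞) (x : X) :
    truncMaximal μ R g x ≤ truncMaximal μ R ({y | a < g y}.indicator g) x + a := by
  refine iSup₂_le fun τ hτ => ?_
  have hV0 : μ (ball x τ) ≠ 0 := (measure_ball_pos μ x hτ.1).ne'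
  have hVtop : μ (ball x τ) ≠ ∞ := measure_ball_lt_top.ne
  calc ⨍⁻ y in ball x τ, g y ∂μ ≤ ⨍⁻ y in ball x τ, ({y | a < g y}.indicator g y + a) ∂μ := by
        refine setLAverage_mono_ae _ (ae_of_all _ fun y => ?_)
        by_cases hy : a < g y
        · simp [indicator_of_mem (show y ∈ {y | a < g y} from hy)]
        · simpa [indicator_of_notMem (show y ∉ {y | a < g y} from hy)] using hy
    _ = ⨍⁻ y in ball x τ, {y | a < g y}.indicator g y ∂μ + a := by
        rw [setLAverage_eq, setLAverage_eq, lintegral_add_right _ measurable_const,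
          setLIntegral_const, ENNReal.add_div, ENNReal.mul_div_cancel_right hV0 hVtop]
    _ ≤ _ := add_le_add_left (setLAverage_ball_le_truncMaximal hτ) _

end MaximalFunction

section HardyLittlewood

variable {E : Type*} [NormedAddCommGroup E] [NormedSpace ℝ E] [FiniteDimensional ℝ E]
  [MeasurableSpace E] [BorelSpace E] {μ : Measure E} [μ.IsAddHaarMeasure]

theorem measure_closedBall_le_of_le_mul (x y : E) {s s' c : ℝ} (hs : 0 < s) (h : s' ≤ c * s) :
    μ (closedBall y s') ≤ ENNReal.ofReal (c ^ finrank ℝ E) * μ (ball x s) := by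
  rcases lt_or_ge s' 0 with hs' | hs'
  · simp [closedBall_eq_empty.2 hs']
  have hc : 0 ≤ c := nonneg_of_mul_nonneg_left (hs'.trans h) hs
  rw [Measure.addHaar_closedBall μ y hs', Measure.addHaar_ball_of_pos μ x hs, ← mul_assoc,
    ← ENNReal.ofReal_mul (by positivity), ← mul_pow]
  gcongr

theorem measure_ball_le_of_le_mul (x y : E) {s s' c : ℝ} (hs : 0 < s) (h : s' ≤ c * s) :
    μ (ball y s') ≤ ENNReal.ofReal (c ^ finrank ℝ E) * μ (ball x s) :=
  (measure_mono ball_subset_closedBall).trans (measure_closedBall_le_of_le_mul x y hs h)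

theorem setLAverage_ball_le_of_setLIntegral_le {g h : E → ℝ≥0∞} {y : E} {τ s c : ℝ} (hτ : 0 < τ)
    (hs : s ≤ c * τ) (hint : ∫⁻ w in ball y τ, g w ∂μ ≤ ∫⁻ w in ball y s, h w ∂μ) :
    ⨍⁻ w in ball y τ, g w ∂μ ≤ ENNReal.ofReal (c ^ finrank ℝ E) * ⨍⁻ w in ball y s, h w ∂μ := by
  have hV0 : μ (ball y τ) ≠ 0 := (measure_ball_pos μ y hτ).ne'
  have hVtop : μ (ball y τ) ≠ ∞ := measure_ball_lt_top.ne
  calc ⨍⁻ w in ball y τ, g w ∂μ = (μ (ball y τ))⁻¹ * ∫⁻ w in ball y τ, g w ∂μ :=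
        (inv_measure_mul_setLIntegral _ _).symm
    _ ≤ (μ (ball y τ))⁻¹ * (μ (ball y s) * ⨍⁻ w in ball y s, h w ∂μ) := by
        rw [measure_mul_setLAverage _ measure_ball_lt_top.ne]
        gcongr
    _ ≤ (μ (ball y τ))⁻¹ * (ENNReal.ofReal (c ^ finrank ℝ E) * μ (ball y τ) *
          ⨍⁻ w in ball y s, h w ∂μ) := by
        gcongr
        exact measure_ball_le_of_le_mul y y hτ hs
    _ = ENNReal.ofReal (c ^ finrank ℝ E) * ⨍⁻ w in ball y s, h w ∂μ := by
        rw [mul_comm _ (μ (ball y τ)), mul_assoc, ← mul_assoc, ENNReal.inv_mul_cancel hV0 hVtop,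
          one_mul]

theorem setLIntegral_ball_le_setLIntegral_setLAverage {g : E → ℝ≥0∞} (hg : Measurable g) {t : ℝ}
    (ht : 0 < t) (y : E) (τ : ℝ) :
    ∫⁻ w in ball y τ, g w ∂μ ≤ ∫⁻ z in ball y (τ + t), ⨍⁻ w in ball z t, g w ∂μ ∂μ := by
  set V := μ (ball (0 : E) t)
  have hV : ∀ z, μ (ball z t) = V := fun z => Measure.addHaar_ball_center μ z t
  have hV0 : V ≠ 0 := (measure_ball_pos μ 0 ht).ne'
  have hVtop : V ≠ ∞ := measure_ball_lt_top.ne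
  -- Fubini: the centers `z` with `w ∈ B(z,t)` form `B(w,t) ⊆ B(y,τ+t)` when `w ∈ B(y,τ)`.
  set F : E × E → ℝ≥0∞ := {q | dist q.1 q.2 < t}.indicator fun q => g q.1
  have hF : Measurable F :=
    (hg.comp measurable_fst).indicator (measurableSet_lt measurable_dist measurable_const)
  calc ∫⁻ w in ball y τ, g w ∂μ
      = V⁻¹ * ∫⁻ w in ball y τ, g w * μ (ball w t ∩ ball y (τ + t)) ∂μ := by
        rw [← lintegral_const_mul' _ _ (ENNReal.inv_ne_top.2 hV0)]
        refine setLIntegral_congr_fun measurableSet_ball fun w hw => ?_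
        rw [inter_eq_self_of_subset_left (ball_subset_ball' (by rw [mem_ball] at hw; linarith)),
          hV, mul_comm (g w), ← mul_assoc, ENNReal.inv_mul_cancel hV0 hVtop, one_mul]
    _ ≤ V⁻¹ * ∫⁻ w, g w * μ (ball w t ∩ ball y (τ + t)) ∂μ := by
        gcongr
        exact Measure.restrict_le_self
    _ = V⁻¹ * ∫⁻ w, ∫⁻ z in ball y (τ + t), F (w, z) ∂μ ∂μ := by
        congr 1
        refine lintegral_congr fun w => ?_
        have hFw : ∀ z, F (w, z) = (ball w t).indicator (fun _ => g w) z := fun z => by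
          simp [F, indicator, mem_ball, dist_comm]
        simp_rw [hFw]
        rw [lintegral_indicator_const measurableSet_ball, Measure.restrict_apply measurableSet_ball]
    _ = V⁻¹ * ∫⁻ z in ball y (τ + t), ∫⁻ w, F (w, z) ∂μ ∂μ := by
        rw [lintegral_lintegral_swap (f := fun w z => F (w, z)) hF.aemeasurable]
    _ = ∫⁻ z in ball y (τ + t), ⨍⁻ w in ball z t, g w ∂μ ∂μ := by
        rw [← lintegral_const_mul' _ _ (ENNReal.inv_ne_top.2 hV0)]
        refine lintegral_congr fun z => ?_
        rw [← inv_measure_mul_setLIntegral, hV, ← lintegral_indicator measurableSet_ball]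
        rfl

theorem lowerSemicontinuous_setLAverage_ball (g : E → ℝ≥0∞) {τ : ℝ} (hτ : 0 < τ) :
    LowerSemicontinuous fun x => ⨍⁻ y in ball x τ, g y ∂μ := by
  have hV : μ (ball (0 : E) τ) ≠ 0 := (measure_ball_pos μ 0 hτ).ne'
  -- The average is `(μ.withDensity g) (ball x τ)` divided by a constant.
  simp_rw [setLAverage_eq, Measure.addHaar_ball_center μ _ τ, ← withDensity_apply' g]
  exact (ENNReal.continuous_div_const _ hV).comp_lowerSemicontinuous
    (lowerSemicontinuous_measure_ball _ τ) fun a b hab => ENNReal.div_le_div_right hab _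

theorem measurable_truncMaximal (R : ℝ) (g : E → ℝ≥0∞) : Measurable (truncMaximal μ R g) :=
  (lowerSemicontinuous_iSup fun _ => lowerSemicontinuous_iSup fun hτ =>
    lowerSemicontinuous_setLAverage_ball g hτ.1).measurable

theorem measure_lt_truncMaximal_le (R : ℝ) (g : E → ℝ≥0∞) {c : ℝ≥0∞} (hc : c ≠ 0) :
    μ {x | c < truncMaximal μ R g x} ≤
      ENNReal.ofReal (4 ^ finrank ℝ E) * c⁻¹ * ∫⁻ y, g y ∂μ := by
  rcases eq_or_ne c ∞ with rfl | hc_top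
  · simp [truncMaximal]
  set S := {x | c < truncMaximal μ R g x}
  have hball : ∀ a : S, ∃ τ ∈ Ioc 0 R,
      μ (ball (a : E) τ) ≤ c⁻¹ * ∫⁻ y in ball (a : E) τ, g y ∂μ := by
    rintro ⟨x, hx⟩
    simp only [S, mem_ofPred_eq, truncMaximal, lt_iSup_iff] at hx
    obtain ⟨τ, hτ, hlt⟩ := hx
    refine ⟨τ, hτ, (ENNReal.mul_le_iff_le_inv hc hc_top).1 ?_⟩
    rw [setLAverage_eq] at hlt
    exact (ENNReal.le_div_iff_mul_le (Or.inl (measure_ball_pos μ x hτ.1).ne')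
      (Or.inl measure_ball_lt_top.ne)).1 hlt.le
  choose τ hτ hτ_le using hball
  obtain ⟨u, -, hdisj, hcover⟩ := Vitali.exists_disjoint_subfamily_covering_enlargement_closedBall
    univ (fun a : S => (a : E)) τ R (fun a _ => (hτ a).2) 4 (by norm_num)
  have hu : u.Countable := hdisj.countable_of_nonempty_interior fun a _ =>
    ⟨a, interior_maximal ball_subset_closedBall isOpen_ball (mem_ball_self (hτ a).1)⟩
  have hS : S ⊆ ⋃ b ∈ u, closedBall (b : E) (4 * τ b) := fun x hx => by
    obtain ⟨b, hb, hsub⟩ := hcover ⟨x, hx⟩ (mem_univ _)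
    exact mem_biUnion hb (hsub (mem_closedBall_self (hτ _).1.le))
  calc μ S ≤ ∑' b : u, μ (closedBall (b : E) (4 * τ b)) :=
        (measure_mono hS).trans (measure_biUnion_le μ hu _)
    _ ≤ ∑' b : u,
          ENNReal.ofReal (4 ^ finrank ℝ E) * (c⁻¹ * ∫⁻ y in ball (b : E) (τ b), g y ∂μ) :=
        ENNReal.tsum_le_tsum fun b => (measure_closedBall_le_of_le_mul _ _ (hτ b).1 le_rfl).trans
          (mul_le_mul_right (hτ_le b) _)
    _ = ENNReal.ofReal (4 ^ finrank ℝ E) * c⁻¹ *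
          ∫⁻ y in ⋃ b ∈ u, ball (b : E) (τ b), g y ∂μ := by
        rw [lintegral_biUnion hu (fun _ _ => measurableSet_ball)
          (hdisj.mono fun _ => ball_subset_closedBall), ENNReal.tsum_mul_left,
          ENNReal.tsum_mul_left, mul_assoc]
    _ ≤ ENNReal.ofReal (4 ^ finrank ℝ E) * c⁻¹ * ∫⁻ y, g y ∂μ := by
        gcongr
        exact Measure.restrict_le_self

theorem measure_lt_truncMaximal_le_setLIntegral {g : E → ℝ≥0∞} (hg : Measurable g) (R : ℝ)
    {s : ℝ} (hs : 0 < s) :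
    μ {x | ENNReal.ofReal s < truncMaximal μ R g x} ≤
      ENNReal.ofReal (4 ^ finrank ℝ E) * (ENNReal.ofReal (s / 2))⁻¹ *
        ∫⁻ x in {x | ENNReal.ofReal (s / 2) < g x}, g x ∂μ := by
  set a := ENNReal.ofReal (s / 2)
  have hsub : {x | ENNReal.ofReal s < truncMaximal μ R g x} ⊆
      {x | a < truncMaximal μ R ({y | a < g y}.indicator g) x} := fun x hx => by
    by_contra hx'
    have hle : truncMaximal μ R ({y | a < g y}.indicator g) x ≤ a := not_lt.1 hx'
    have hle' := (truncMaximal_le_indicator_add g R a x).trans (add_le_add_left hle a)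
    rw [← ENNReal.ofReal_add (by positivity) (by positivity), add_halves] at hle'
    exact (not_lt.2 hle') hx
  calc μ {x | ENNReal.ofReal s < truncMaximal μ R g x}
      ≤ μ {x | a < truncMaximal μ R ({y | a < g y}.indicator g) x} := measure_mono hsub
    _ ≤ ENNReal.ofReal (4 ^ finrank ℝ E) * a⁻¹ * ∫⁻ y, {y | a < g y}.indicator g y ∂μ :=
        measure_lt_truncMaximal_le R _ (ENNReal.ofReal_pos.2 (half_pos hs)).ne'
    _ = _ := by rw [lintegral_indicator (measurableSet_lt measurable_const hg)]

theorem lintegral_truncMaximal_rpow_le {g : E → ℝ≥0∞} (hg : Measurable g) (R : ℝ) {p : ℝ}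
    (hp : 1 < p) :
    ∫⁻ x, truncMaximal μ R g x ^ p ∂μ ≤
      ENNReal.ofReal (p * (2 ^ p / (p - 1))) * ENNReal.ofReal (4 ^ finrank ℝ E) *
        ∫⁻ x, g x ^ p ∂μ :=
  lintegral_rpow_le_of_meas_lt_le (measurable_truncMaximal R g).aemeasurable hg hp
    fun _ hs => measure_lt_truncMaximal_le_setLIntegral hg R hs

theorem lintegral_truncMaximal_indicator_rpow_le {g : E → ℝ≥0∞} (hg : Measurable g) {s : Set E}
    (hs : MeasurableSet s) (R : ℝ) {p : ℝ} (hp : 1 < p) :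
    ∫⁻ x, truncMaximal μ R (s.indicator g) x ^ p ∂μ ≤
      ENNReal.ofReal (p * (2 ^ p / (p - 1))) * ENNReal.ofReal (4 ^ finrank ℝ E) *
        ∫⁻ x in s, g x ^ p ∂μ := by
  have hind : (fun x => s.indicator g x ^ p) = s.indicator fun x => g x ^ p := by
    ext x
    by_cases hx : x ∈ s <;> simp [hx, ENNReal.zero_rpow_of_pos (by linarith : 0 < p)]
  have hM := lintegral_truncMaximal_rpow_le (μ := μ) (hg.indicator hs) R hp
  rwa [hind, lintegral_indicator hs] at hM

end HardyLittlewood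

theorem setLAverage_ball_le_umaximal (G : Rn n → ℝ≥0∞) {x y : Rn n} {ρ : ℝ} (hρ : 0 < ρ)
    (hx : x ∈ ball y ρ) : ⨍⁻ z in ball y ρ, G z ∂volume ≤ umaximal G x := by
  rw [← inv_measure_mul_setLIntegral]
  exact le_iSup_of_le y (le_iSup_of_le ρ (le_iSup_of_le hρ (le_iSup_of_le hx le_rfl)))

theorem setLAverage_ball_le_two_pow_mul_umaximal {g : Rn n → ℝ≥0∞} (hg : Measurable g)
    {x y : Rn n} {t τ : ℝ} (ht : 0 < t) (htτ : t ≤ τ) (hxy : dist x y < t) :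
    ⨍⁻ w in ball y τ, g w ∂volume ≤
      ENNReal.ofReal (2 ^ n) * umaximal (fun z => ⨍⁻ w in ball z t, g w ∂volume) x := by
  have hbound := setLAverage_ball_le_of_setLIntegral_le (μ := volume) (c := 2) (by linarith)
    (by linarith) (setLIntegral_ball_le_setLIntegral_setLAverage hg ht y τ)
  rw [finrank_euclideanSpace_fin] at hbound
  exact hbound.trans (mul_le_mul_right (setLAverage_ball_le_umaximal _ (by linarith)
    (by rw [mem_ball]; linarith)) _)

theorem maximal_le_truncMaximal_add_umaximal {f : Rn n → ℝ} (hf : Measurable f) {x y : Rn n}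
    {t : ℝ} (ht : 0 < t) (hy : y ∈ ball x t) :
    maximal f y ≤
      truncMaximal volume t ((ball x (2 * t)).indicator fun w => (‖f w‖₊ : ℝ≥0∞)) y +
        ENNReal.ofReal (2 ^ n) *
          umaximal (fun z => ⨍⁻ w in ball z t, (‖f w‖₊ : ℝ≥0∞) ∂volume) x := by
  rw [mem_ball] at hy
  refine iSup₂_le fun τ hτ => ?_
  rw [inv_measure_mul_setLIntegral]
  rcases le_or_gt τ t with hτt | htτ
  · refine le_add_right (le_of_eq_of_le ?_ (setLAverage_ball_le_truncMaximal ⟨hτ, hτt⟩))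
    refine setLAverage_congr_fun measurableSet_ball fun w hw =>
      (indicator_of_mem (f := fun w => (‖f w‖₊ : ℝ≥0∞)) ?_).symm
    rw [mem_ball] at hw ⊢
    linarith [dist_triangle w y x]
  · exact le_add_left (setLAverage_ball_le_two_pow_mul_umaximal hf.nnnorm.coe_nnreal_ennreal ht
      htτ.le (by rwa [dist_comm]))

theorem ballAvg_eq (r : ℝ) (g : Rn n → ℝ≥0∞) (x : Rn n) (t : ℝ) :
    ballAvg r g x t = (⨍⁻ y in ball x t, g y ^ r ∂volume) ^ (1 / r) := by
  rw [ballAvg, inv_measure_mul_setLIntegral]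

theorem ballAvg_mono {r : ℝ} (hr : 0 ≤ r) {g g' : Rn n → ℝ≥0∞} {x : Rn n} {t : ℝ}
    (h : ∀ y ∈ ball x t, g y ≤ g' y) : ballAvg r g x t ≤ ballAvg r g' x t := by
  unfold ballAvg
  gcongr ?_ ^ _
  exact mul_le_mul_right (setLIntegral_mono' measurableSet_ball fun y hy =>
    ENNReal.rpow_le_rpow (h y hy) hr) _

theorem ballAvg_add_const_le {r : ℝ} (hr : 1 ≤ r) {a : Rn n → ℝ≥0∞} (ha : Measurable a)
    (b : ℝ≥0∞) (x : Rn n) {t : ℝ} (ht : 0 < t) :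
    ballAvg r (fun y => a y + b) x t ≤ ballAvg r a x t + b := by
  simp only [ballAvg_eq, setLAverage_eq']
  refine (ENNReal.lintegral_Lp_add_le ha.aemeasurable aemeasurable_const hr).trans_eq ?_
  rw [← setLAverage_eq' _ (fun _ => b ^ r), setLAverage_const (measure_ball_pos volume x ht).ne'
    measure_ball_lt_top.ne, ← ENNReal.rpow_mul, mul_one_div_cancel (by linarith), ENNReal.rpow_one]

theorem ballAvg_le_of_lintegral_le {r : ℝ} (hr : 0 < r) {a g : Rn n → ℝ≥0∞} (hg : Measurable g)
    {x : Rn n} {t : ℝ} (ht : 0 < t) {K : ℝ≥0∞}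
    (h : ∫⁻ y, a y ^ r ≤ K * ∫⁻ y in ball x (2 * t), g y ^ r) :
    ballAvg r a x t ≤ (ENNReal.ofReal (2 ^ n) * K) ^ (1 / r) * ballAvg r g x (2 * t) := by
  simp only [ballAvg_eq]
  rw [← ENNReal.mul_rpow_of_nonneg _ _ (by positivity)]
  gcongr ?_ ^ _
  have hint : ∫⁻ y in ball x t, a y ^ r ≤ ∫⁻ y in ball x (2 * t), K * g y ^ r := by
    rw [lintegral_const_mul _ (hg.pow_const r)]
    exact (setLIntegral_le_lintegral _ _).trans h
  have hbound := setLAverage_ball_le_of_setLIntegral_le (μ := volume) ht le_rfl hint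
  rw [finrank_euclideanSpace_fin] at hbound
  rwa [setLAverage_const_mul _ (hg.pow_const r), ← mul_assoc] at hbound

/-- pointwise bound for the centered maximal function's `L^r` ball averages. -/
theorem stmt0 (n : ℕ) (r : ℝ) (hr : 1 < r) :
    ∃ C : ℝ≥0∞, 0 < C ∧ C ≠ ∞ ∧ ∀ (f : Rn n → ℝ), Measurable f →
      ∀ (x : Rn n) (t : ℝ), 0 < t →
        ballAvg r (maximal f) x t ≤
          C * (ballAvg r (fun y => (‖f y‖₊ : ℝ≥0∞)) x (2 * t) +
            umaximal (fun z => (volume (ball z t))⁻¹ * ∫⁻ w in ball z t, (‖f w‖₊ : ℝ≥0∞)) x) := by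
  set K := ENNReal.ofReal (r * (2 ^ r / (r - 1))) * ENNReal.ofReal (4 ^ n)
  set A := (ENNReal.ofReal (2 ^ n) * K) ^ (1 / r)
  refine ⟨A + ENNReal.ofReal (2 ^ n), ?_, by finiteness, fun f hf x t ht => ?_⟩
  · exact (ENNReal.ofReal_pos.2 (by positivity)).trans_le le_add_self
  set g : Rn n → ℝ≥0∞ := fun y => ‖f y‖₊
  have hg : Measurable g := hf.nnnorm.coe_nnreal_ennreal
  set U := umaximal (fun z => ⨍⁻ w in ball z t, g w ∂volume) x
  have hstrong := lintegral_truncMaximal_indicator_rpow_le (μ := volume) hg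
    (measurableSet_ball (x := x) (ε := 2 * t)) t hr
  rw [finrank_euclideanSpace_fin] at hstrong
  simp only [inv_measure_mul_setLIntegral]
  calc ballAvg r (maximal f) x t
      ≤ ballAvg r (fun y => truncMaximal volume t ((ball x (2 * t)).indicator g) y +
          ENNReal.ofReal (2 ^ n) * U) x t :=
        ballAvg_mono (by linarith) fun y hy => maximal_le_truncMaximal_add_umaximal hf ht hy
    _ ≤ ballAvg r (truncMaximal volume t ((ball x (2 * t)).indicator g)) x t +
          ENNReal.ofReal (2 ^ n) * U :=
        ballAvg_add_const_le hr.le (measurable_truncMaximal _ _) _ x ht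
    _ ≤ A * ballAvg r g x (2 * t) + ENNReal.ofReal (2 ^ n) * U := by
        gcongr
        exact ballAvg_le_of_lintegral_le (by linarith) hg ht hstrong
    _ ≤ (A + ENNReal.ofReal (2 ^ n)) * (ballAvg r g x (2 * t) + U) := by
        rw [mul_add]
        gcongr
        exacts [le_self_add, le_add_self]
end
end

section
/- Let T be a Calderón–Zygmund operator of order δ ∈ (0,1] bounded on tent space T^r_r (acting slicewise) for a fixed 1 < r < ∞, and let n/(n+δ) < q ≤ 1. If A is a 𝔗^q_r atom adapted to ball B (a T^q_r atom with ∫_{ℝⁿ} A(x,t) dx = 0 for a.e. t), then the slicewise image TA(x,t) = T(A(·,t))(x) is, up to a constant independent of A, a T^q_r molecule adapted to B with decay exponent ε = n + δ − n/q > 0: (∬_{T(4B)} |TA|^r dx dt/t)^{1/r} ≲ |4B|^{1/r−1/q}, and for j ≥ 2, (∬_{T(2^{j+1}B)∖T(2^jB)} |TA|^r dx dt/t)^{1/r} ≲ 2^{−(j+1)ε} |2^{j+1}B|^{1/r−1/q}. -/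
open MeasureTheory Metric Set ENNReal
open scoped NNReal

noncomputable section

variable {n : ℕ}

/-!
The bound on the tent over `4B` is the `L^r` boundedness of `T` applied slice by slice. On the
annulus `T(2^{j+1}B) ∖ T(2^jB)`, a slice `t` on which `A(·, t) ≠ 0` has `t ≤ ρ`, so the point `y`
stays at distance `≳ 2^j ρ` from `B`. There the mean-zero condition lets one replace `K(y, z)` by
`K(y, z) - K(y, x₀)`, and Hörmander's condition gives
`|TA(y, t)| ≲ ρ^δ (2^j ρ)^{-(n+δ)} ‖A(·, t)‖₁ ≤ ρ^δ (2^j ρ)^{-(n+δ)} |B|^{1-1/r} ‖A(·, t)‖_r`.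
Integrating over `y ∈ 2^{j+1}B` and in `dt/t`, and using the size condition on `A`, yields the
factor `2^{-(j+1)ε} |2^{j+1}B|^{1/r-1/q}`.
-/

section NormedSpace

variable {E : Type*} [NormedAddCommGroup E] [NormedSpace ℝ E] [Nontrivial E]

theorem exists_mem_compl_ball_dist_eq (x x₀ : E) {ρ : ℝ} (hρ : 0 ≤ ρ) :
    ∃ z ∈ (ball x₀ ρ)ᶜ, dist x z = ρ := by
  obtain ⟨u, hu⟩ := exists_norm_eq E hρ
  -- `x + u` and `x - u` are `2ρ` apart, so one of them is at distance `≥ ρ` from `x₀`.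
  have hfar : ρ ≤ dist (x + u) x₀ ∨ ρ ≤ dist (x - u) x₀ := by
    by_contra! h
    have h2u : dist (x + u) (x - u) = 2 * ρ := by
      rw [dist_eq_norm, add_sub_sub_cancel, ← two_smul ℝ u, norm_smul, hu, Real.norm_two]
    linarith [dist_triangle_right (x + u) (x - u) x₀]
  rcases hfar with h | h
  · exact ⟨x + u, by simpa using h, by simp [hu]⟩
  · exact ⟨x - u, by simpa using h, by simp [hu]⟩

theorem infDist_compl_ball_le (x x₀ : E) {ρ : ℝ} (hρ : 0 ≤ ρ) :
    infDist x (ball x₀ ρ)ᶜ ≤ ρ := by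
  obtain ⟨z, hz, rfl⟩ := exists_mem_compl_ball_dist_eq x x₀ hρ
  exact infDist_le_dist_of_mem hz

theorem sub_dist_le_infDist_compl_ball (x x₀ : E) {ρ : ℝ} (hρ : 0 ≤ ρ) :
    ρ - dist x x₀ ≤ infDist x (ball x₀ ρ)ᶜ := by
  obtain ⟨z, hz, -⟩ := exists_mem_compl_ball_dist_eq x x₀ hρ
  refine (le_infDist ⟨z, hz⟩).2 fun y hy => ?_
  have hy : ρ ≤ dist y x₀ := by simpa using hy
  linarith [dist_triangle_left y x₀ x]

end NormedSpace

section Lebesgue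

variable {X : Type*} [MeasurableSpace X] {μ : Measure X}

theorem memLp_ofReal_of_lintegral_rpow_ne_top {f : X → ℝ} (hf : AEStronglyMeasurable f μ)
    {r : ℝ} (hr : 0 < r) (hfin : ∫⁻ x, ‖f x‖ₑ ^ r ∂μ ≠ ∞) : MemLp f (ENNReal.ofReal r) μ :=
  ⟨hf, (eLpNorm_lt_top_iff_lintegral_rpow_enorm_lt_top (by simpa using hr) ofReal_ne_top).2
    (by simpa [toReal_ofReal hr.le] using hfin.lt_top)⟩

theorem lintegral_rpow_enorm_le_of_eLpNorm_le {r C : ℝ} (hr : 0 < r) (hC : 0 < C)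
    {T : (X → ℝ) → X → ℝ}
    (hT : ∀ f : X → ℝ, MemLp f (ENNReal.ofReal r) μ →
      eLpNorm (T f) (ENNReal.ofReal r) μ ≤ ENNReal.ofReal C * eLpNorm f (ENNReal.ofReal r) μ)
    {f : X → ℝ} (hf : AEStronglyMeasurable f μ) :
    ∫⁻ x, ‖T f x‖ₑ ^ r ∂μ ≤ ENNReal.ofReal C ^ r * ∫⁻ x, ‖f x‖ₑ ^ r ∂μ := by
  by_cases hfin : ∫⁻ x, ‖f x‖ₑ ^ r ∂μ = ∞
  · rw [hfin, mul_top (rpow_pos (ofReal_pos.2 hC) ofReal_ne_top).ne']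
    exact le_top
  have hbound := rpow_le_rpow (hT f (memLp_ofReal_of_lintegral_rpow_ne_top hf hr hfin)) hr.le
  rwa [eLpNorm_eq_lintegral_rpow_enorm_toReal (by simpa using hr) ofReal_ne_top,
    eLpNorm_eq_lintegral_rpow_enorm_toReal (by simpa using hr) ofReal_ne_top, toReal_ofReal hr.le,
    mul_rpow_of_nonneg _ _ hr.le, ← rpow_mul, ← rpow_mul, one_div_mul_cancel hr.ne', rpow_one,
    rpow_one] at hbound

theorem lintegral_enorm_le_of_forall_notMem {E : Type*} [NormedAddCommGroup E] {f : X → E}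
    (hf : AEStronglyMeasurable f μ) {s : Set X} (hfs : ∀ x ∉ s, f x = 0) {r : ℝ} (hr : 1 ≤ r) :
    ∫⁻ x, ‖f x‖ₑ ∂μ ≤ (∫⁻ x, ‖f x‖ₑ ^ r ∂μ) ^ (1 / r) * μ s ^ (1 - 1 / r) := by
  have hsupp : ∀ {g : X → ℝ≥0∞}, (∀ x, f x = 0 → g x = 0) → ∫⁻ x in s, g x ∂μ = ∫⁻ x, g x ∂μ :=
    fun hg => setLIntegral_eq_of_support_subset fun x hx =>
      Classical.byContradiction fun hxs => hx (hg x (hfs x hxs))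
  have := eLpNorm'_le_eLpNorm'_mul_rpow_measure_univ one_pos hr (hf.restrict (s := s))
  simp only [eLpNorm', rpow_one, div_one, Measure.restrict_apply_univ] at this
  rwa [hsupp (by simp +contextual),
    hsupp (by simp +contextual [zero_rpow_of_pos (by linarith : 0 < r)])] at this

end Lebesgue

theorem enorm_integral_mul_le_of_integral_eq_zero {X : Type*} [MeasurableSpace X]
    {μ : Measure X} {k f : X → ℝ} {s : Set X} {c M : ℝ} (hf : Integrable f μ)
    (hmean : ∫ y, f y ∂μ = 0) (hfs : ∀ y ∉ s, f y = 0) (hk : ∀ y ∈ s, |k y - c| ≤ M) :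
    ‖∫ y, k y * f y ∂μ‖ₑ ≤ ENNReal.ofReal M * ∫⁻ y, ‖f y‖ₑ ∂μ := by
  by_cases hkf : Integrable (fun y => k y * f y) μ
  swap
  · simp [integral_undef hkf]
  have hcancel : ∫ y, k y * f y ∂μ = ∫ y, (k y - c) * f y ∂μ := by
    simp_rw [sub_mul]
    rw [integral_sub hkf (hf.const_mul c), integral_const_mul, hmean, mul_zero, sub_zero]
  have hpoint : ∀ y, ‖(k y - c) * f y‖ₑ ≤ ENNReal.ofReal M * ‖f y‖ₑ := by
    intro y
    by_cases hy : y ∈ s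
    · rw [enorm_mul, Real.enorm_eq_ofReal_abs]
      gcongr
      exact hk y hy
    · simp [hfs y hy]
  calc ‖∫ y, k y * f y ∂μ‖ₑ = ‖∫ y, (k y - c) * f y ∂μ‖ₑ := by rw [hcancel]
    _ ≤ ∫⁻ y, ‖(k y - c) * f y‖ₑ ∂μ := enorm_integral_le_lintegral_enorm _
    _ ≤ ∫⁻ y, ENNReal.ofReal M * ‖f y‖ₑ ∂μ := lintegral_mono hpoint
    _ = ENNReal.ofReal M * ∫⁻ y, ‖f y‖ₑ ∂μ := lintegral_const_mul' _ _ ofReal_ne_top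

theorem abs_kernel_sub_le {X : Type*} [PseudoMetricSpace X] {K : X → X → ℝ} {C δ s : ℝ}
    (hC : 0 ≤ C) (hδ : 0 ≤ δ) (hs : 0 ≤ s)
    (hK : ∀ x y z : X, dist x y > 2 * dist y z →
      |K x y - K x z| ≤ C * dist y z ^ δ / dist x y ^ s)
    {x₀ x y : X} {ρ D : ℝ} (hD : 2 * ρ ≤ D) (hx : D + ρ ≤ dist x x₀) (hy : y ∈ ball x₀ ρ) :
    |K x y - K x x₀| ≤ C * ρ ^ δ / D ^ s := by
  rw [mem_ball] at hy
  have hρ : 0 < ρ := dist_nonneg.trans_lt hy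
  have hD0 : 0 < D := by linarith
  have hxy : D < dist x y := by linarith [dist_triangle x y x₀]
  calc |K x y - K x x₀| ≤ C * dist y x₀ ^ δ / dist x y ^ s := hK x y x₀ (by linarith)
    _ ≤ C * ρ ^ δ / D ^ s := by gcongr

theorem mem_ball_of_mem_tent {x₀ y : Rn n} {ρ t : ℝ} (h : (y, t) ∈ tent x₀ ρ) :
    y ∈ ball x₀ ρ :=
  Classical.byContradiction fun hy => h.1.not_ge (h.2.trans_eq (infDist_zero_of_mem hy))

theorem le_of_mem_tent [Nontrivial (Rn n)] {x₀ y : Rn n} {ρ t : ℝ} (hρ : 0 ≤ ρ)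
    (h : (y, t) ∈ tent x₀ ρ) : t ≤ ρ :=
  h.2.trans (infDist_compl_ball_le _ _ hρ)

theorem mk_mem_tent_of_dist_add_le [Nontrivial (Rn n)] {x₀ y : Rn n} {ρ t : ℝ} (ht : 0 < t)
    (h : dist y x₀ + t ≤ ρ) : (y, t) ∈ tent x₀ ρ := by
  have hρ : 0 ≤ ρ := by linarith [dist_nonneg (x := y) (y := x₀)]
  exact ⟨ht, by linarith [sub_dist_le_infDist_compl_ball y x₀ hρ]⟩

theorem tent_eq_empty [Subsingleton (Rn n)] (x₀ : Rn n) (ρ : ℝ) : tent x₀ ρ = ∅ := by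
  refine eq_empty_of_forall_notMem fun p hp => hp.1.not_ge (hp.2.trans_eq ?_)
  by_cases h : p.1 ∈ (ball x₀ ρ)ᶜ
  · exact infDist_zero_of_mem h
  · rw [show (ball x₀ ρ)ᶜ = ∅ from eq_empty_of_forall_notMem fun y hy =>
      h (Subsingleton.elim y p.1 ▸ hy), infDist_empty]

theorem rpow_tentInt_le_of_slice_le {r : ℝ} (hr : 0 < r) {M A : Rn n → ℝ → ℝ}
    {S : Set (Rn n × ℝ)} {c : ℝ≥0∞} (hc : c ≠ ∞)
    (h : ∀ᵐ t ∂volume.restrict (Ioi (0 : ℝ)),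
      ∫⁻ y, S.indicator (fun p => ‖M p.1 p.2‖ₑ ^ r) (y, t) ≤ c ^ r * ∫⁻ y, ‖A y t‖ₑ ^ r) :
    tentInt r M S ^ (1 / r) ≤ c * tentInt r A univ ^ (1 / r) := by
  have hint : tentInt r M S ≤ c ^ r * tentInt r A univ := by
    calc tentInt r M S
        ≤ ∫⁻ t in Ioi 0, (c ^ r * ∫⁻ y, ‖A y t‖ₑ ^ r) * ENNReal.ofReal t⁻¹ :=
          lintegral_mono_ae (h.mono fun t ht => by gcongr; exact ht)
      _ = c ^ r * tentInt r A univ := by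
          rw [tentInt, ← lintegral_const_mul' _ _ (rpow_ne_top_of_nonneg hr.le hc)]
          simp [mul_assoc, enorm_eq_nnnorm]
  calc tentInt r M S ^ (1 / r) ≤ (c ^ r * tentInt r A univ) ^ (1 / r) := by gcongr
    _ = c * tentInt r A univ ^ (1 / r) := by
      rw [mul_rpow_of_nonneg _ _ (by positivity), ← rpow_mul, mul_one_div_cancel hr.ne',
        rpow_one]

section Operator

variable {r δ CK : ℝ} {K : Rn n → Rn n → ℝ} {T : (Rn n → ℝ) → Rn n → ℝ}

theorem apply_zero_of_kernel
    (hrep : ∀ f : Rn n → ℝ, MemLp f (ENNReal.ofReal r) volume →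
      ∀ x, x ∉ tsupport f → T f x = ∫ y, K x y * f y) (x : Rn n) :
    T 0 x = 0 := by
  simpa using hrep 0 MemLp.zero' x (by simp)

theorem rpow_tentInt_slicewise_le (hr : 0 < r) (hCK : 0 < CK)
    (hLr : ∀ f : Rn n → ℝ, MemLp f (ENNReal.ofReal r) volume →
      eLpNorm (T f) (ENNReal.ofReal r) volume ≤
        ENNReal.ofReal CK * eLpNorm f (ENNReal.ofReal r) volume)
    {A : Rn n → ℝ → ℝ} (hA : Measurable (Function.uncurry A)) (S : Set (Rn n × ℝ)) :
    tentInt r (fun y t => T (fun z => A z t) y) S ^ (1 / r) ≤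
      ENNReal.ofReal CK * tentInt r A univ ^ (1 / r) := by
  refine rpow_tentInt_le_of_slice_le hr ofReal_ne_top (ae_of_all _ fun t => ?_)
  calc ∫⁻ y, S.indicator (fun p => ‖T (fun z => A z p.2) p.1‖ₑ ^ r) (y, t)
      ≤ ∫⁻ y, ‖T (fun z => A z t) y‖ₑ ^ r :=
        lintegral_mono fun y => indicator_le_self _ _ (y, t)
    _ ≤ ENNReal.ofReal CK ^ r * ∫⁻ y, ‖A y t‖ₑ ^ r :=
        lintegral_rpow_enorm_le_of_eLpNorm_le hr hCK hLr
          (hA.comp measurable_prodMk_right).aestronglyMeasurable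

theorem enorm_apply_le_of_integral_eq_zero (hδ : 0 ≤ δ) (hCK : 0 ≤ CK)
    (hsmooth : ∀ x y z : Rn n, dist x y > 2 * dist y z →
      |K x y - K x z| ≤ CK * dist y z ^ δ / dist x y ^ ((n : ℝ) + δ))
    (hrep : ∀ f : Rn n → ℝ, MemLp f (ENNReal.ofReal r) volume →
      ∀ x, x ∉ tsupport f → T f x = ∫ y, K x y * f y)
    {f : Rn n → ℝ} (hfr : MemLp f (ENNReal.ofReal r) volume) (hf : Integrable f)
    (hmean : ∫ y, f y = 0) {x₀ x : Rn n} {ρ D : ℝ} (hρ : 0 < ρ)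
    (hfs : ∀ y ∉ ball x₀ ρ, f y = 0) (hD : 2 * ρ ≤ D) (hx : D + ρ ≤ dist x x₀) :
    ‖T f x‖ₑ ≤ ENNReal.ofReal (CK * ρ ^ δ / D ^ ((n : ℝ) + δ)) * ∫⁻ y, ‖f y‖ₑ := by
  have hxf : x ∉ tsupport f := fun hxf => by
    have hsupp : tsupport f ⊆ closedBall x₀ ρ :=
      (closure_mono fun y hy => Classical.byContradiction fun hyB =>
        Function.mem_support.1 hy (hfs y hyB)).trans closure_ball_subset_closedBall
    linarith [mem_closedBall.1 (hsupp hxf)]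
  rw [hrep f hfr x hxf]
  exact enorm_integral_mul_le_of_integral_eq_zero hf hmean hfs fun y hy =>
    abs_kernel_sub_le hCK hδ (by positivity) hsmooth hD (by linarith) hy

theorem enorm_apply_le_of_notMem_tent [Nontrivial (Rn n)] (hδ : 0 ≤ δ) (hCK : 0 ≤ CK)
    (hsmooth : ∀ x y z : Rn n, dist x y > 2 * dist y z →
      |K x y - K x z| ≤ CK * dist y z ^ δ / dist x y ^ ((n : ℝ) + δ))
    (hrep : ∀ f : Rn n → ℝ, MemLp f (ENNReal.ofReal r) volume →
      ∀ x, x ∉ tsupport f → T f x = ∫ y, K x y * f y)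
    {f : Rn n → ℝ} (hfr : MemLp f (ENNReal.ofReal r) volume) (hf : Integrable f)
    (hmean : ∫ z, f z = 0) {x₀ y : Rn n} {ρ t : ℝ} (hρ : 0 < ρ) (ht : 0 < t)
    (hft : ∀ z, f z ≠ 0 → (z, t) ∈ tent x₀ ρ) {j : ℕ} (hj : 2 ≤ j)
    (hy : (y, t) ∉ tent x₀ (2 ^ j * ρ)) :
    ‖T f y‖ₑ ≤ ENNReal.ofReal (CK * ρ ^ δ / (2 ^ j * ρ / 2) ^ ((n : ℝ) + δ)) * ∫⁻ z, ‖f z‖ₑ := by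
  by_cases hf0 : f = 0
  · simp [hf0, apply_zero_of_kernel hrep]
  obtain ⟨z, hz⟩ : ∃ z, f z ≠ 0 := by
    by_contra! h
    exact hf0 (funext h)
  have htρ : t ≤ ρ := le_of_mem_tent hρ.le (hft z hz)
  have h4 : (4 : ℝ) ≤ 2 ^ j := by
    calc (4 : ℝ) = 2 ^ 2 := by norm_num
      _ ≤ 2 ^ j := pow_le_pow_right₀ one_le_two hj
  have h4ρ : 4 * ρ ≤ 2 ^ j * ρ := mul_le_mul_of_nonneg_right h4 hρ.le
  have hfar : 2 ^ j * ρ / 2 + ρ ≤ dist y x₀ := by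
    by_contra! h
    exact hy (mk_mem_tent_of_dist_add_le ht (by linarith))
  have hfs : ∀ z ∉ ball x₀ ρ, f z = 0 := fun z hzB =>
    Classical.byContradiction fun hz => hzB (mem_ball_of_mem_tent (hft z hz))
  exact enorm_apply_le_of_integral_eq_zero hδ hCK hsmooth hrep hfr hf hmean hρ hfs (by linarith)
    hfar

theorem lintegral_slice_annulus_le [Nontrivial (Rn n)] (hr : 1 < r) (hδ : 0 ≤ δ) (hCK : 0 ≤ CK)
    (hsmooth : ∀ x y z : Rn n, dist x y > 2 * dist y z →
      |K x y - K x z| ≤ CK * dist y z ^ δ / dist x y ^ ((n : ℝ) + δ))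
    (hrep : ∀ f : Rn n → ℝ, MemLp f (ENNReal.ofReal r) volume →
      ∀ x, x ∉ tsupport f → T f x = ∫ y, K x y * f y)
    {f : Rn n → ℝ} (hf : Measurable f) (hfin : ∫⁻ z, ‖f z‖ₑ ^ r ≠ ∞) (hmean : ∫ z, f z = 0)
    {x₀ : Rn n} {ρ t : ℝ} (hρ : 0 < ρ) (ht : 0 < t) (hft : ∀ z, f z ≠ 0 → (z, t) ∈ tent x₀ ρ)
    {j : ℕ} (hj : 2 ≤ j) :
    ∫⁻ y, {y | (y, t) ∈ tent x₀ (2 ^ (j + 1) * ρ) \ tent x₀ (2 ^ j * ρ)}.indicator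
        (fun y => ‖T f y‖ₑ ^ r) y ≤
      (ENNReal.ofReal (CK * ρ ^ δ / (2 ^ j * ρ / 2) ^ ((n : ℝ) + δ)) *
        volume (ball x₀ ρ) ^ (1 - 1 / r) * volume (ball x₀ (2 ^ (j + 1) * ρ)) ^ (1 / r)) ^ r *
        ∫⁻ z, ‖f z‖ₑ ^ r := by
  have hr0 : 0 < r := one_pos.trans hr
  set M := ENNReal.ofReal (CK * ρ ^ δ / (2 ^ j * ρ / 2) ^ ((n : ℝ) + δ))
  set B := ball x₀ ρ
  set Bj := ball x₀ (2 ^ (j + 1) * ρ)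
  have hfs : ∀ z ∉ B, f z = 0 := fun z hzB =>
    Classical.byContradiction fun hz => hzB (mem_ball_of_mem_tent (hft z hz))
  have hL1 := lintegral_enorm_le_of_forall_notMem (μ := volume) hf.aestronglyMeasurable hfs hr.le
  have hint : Integrable f := ⟨hf.aestronglyMeasurable, hL1.trans_lt (mul_lt_top
    (rpow_lt_top_of_nonneg (by positivity) hfin)
    (rpow_lt_top_of_nonneg (by rw [sub_nonneg, div_le_one hr0]; exact hr.le)
      measure_ball_lt_top.ne))⟩
  have hpoint : ∀ y, {y | (y, t) ∈ tent x₀ (2 ^ (j + 1) * ρ) \ tent x₀ (2 ^ j * ρ)}.indicator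
      (fun y => ‖T f y‖ₑ ^ r) y ≤ Bj.indicator (fun _ => (M * ∫⁻ z, ‖f z‖ₑ) ^ r) y := by
    intro y
    by_cases hy : y ∈ {y | (y, t) ∈ tent x₀ (2 ^ (j + 1) * ρ) \ tent x₀ (2 ^ j * ρ)}
    · rw [indicator_of_mem hy, indicator_of_mem (mem_ball_of_mem_tent hy.1)]
      gcongr
      exact enorm_apply_le_of_notMem_tent hδ hCK hsmooth hrep
        (memLp_ofReal_of_lintegral_rpow_ne_top hf.aestronglyMeasurable hr0 hfin) hint hmean hρ ht
        hft hj hy.2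
    · rw [indicator_of_notMem hy]
      exact zero_le
  calc _ ≤ ∫⁻ y, Bj.indicator (fun _ => (M * ∫⁻ z, ‖f z‖ₑ) ^ r) y := lintegral_mono hpoint
    _ = (M * ∫⁻ z, ‖f z‖ₑ) ^ r * volume Bj := by
      rw [lintegral_indicator measurableSet_ball, setLIntegral_const]
    _ ≤ (M * ((∫⁻ z, ‖f z‖ₑ ^ r) ^ (1 / r) * volume B ^ (1 - 1 / r))) ^ r * volume Bj := by
      gcongr
    _ = (M * volume B ^ (1 - 1 / r) * volume Bj ^ (1 / r)) ^ r * ∫⁻ z, ‖f z‖ₑ ^ r := by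
      simp only [mul_rpow_of_nonneg _ _ hr0.le, ← rpow_mul, one_div_mul_cancel hr0.ne', rpow_one]
      ring

theorem rpow_tentInt_annulus_le (hr : 1 < r) (hδ : 0 ≤ δ) (hCK : 0 < CK)
    (hsmooth : ∀ x y z : Rn n, dist x y > 2 * dist y z →
      |K x y - K x z| ≤ CK * dist y z ^ δ / dist x y ^ ((n : ℝ) + δ))
    (hrep : ∀ f : Rn n → ℝ, MemLp f (ENNReal.ofReal r) volume →
      ∀ x, x ∉ tsupport f → T f x = ∫ y, K x y * f y)
    {A : Rn n → ℝ → ℝ} (hA : Measurable (Function.uncurry A)) {x₀ : Rn n} {ρ : ℝ}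
    (hρ : 0 < ρ) (hsupp : ∀ y t, A y t ≠ 0 → (y, t) ∈ tent x₀ ρ)
    (hmean : ∀ᵐ t ∂(volume.restrict (Ioi (0 : ℝ))), (∫ x, A x t) = 0) {j : ℕ} (hj : 2 ≤ j) :
    tentInt r (fun y t => T (fun z => A z t) y)
        (tent x₀ (2 ^ (j + 1) * ρ) \ tent x₀ (2 ^ j * ρ)) ^ (1 / r) ≤
      ENNReal.ofReal (CK * ρ ^ δ / (2 ^ j * ρ / 2) ^ ((n : ℝ) + δ)) *
        volume (ball x₀ ρ) ^ (1 - 1 / r) * volume (ball x₀ (2 ^ (j + 1) * ρ)) ^ (1 / r) *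
        tentInt r A univ ^ (1 / r) := by
  have hr0 : 0 < r := one_pos.trans hr
  rcases subsingleton_or_nontrivial (Rn n) with _ | _
  · rw [show tent x₀ (2 ^ (j + 1) * ρ) \ tent x₀ (2 ^ j * ρ) = ∅ by simp [tent_eq_empty]]
    simp [tentInt, zero_rpow_of_pos (inv_pos.2 hr0)]
  have hB : 0 < volume (ball x₀ ρ) := measure_ball_pos _ _ hρ
  have hBj : 0 < volume (ball x₀ (2 ^ (j + 1) * ρ)) := measure_ball_pos _ _ (by positivity)
  set c := ENNReal.ofReal (CK * ρ ^ δ / (2 ^ j * ρ / 2) ^ ((n : ℝ) + δ)) *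
    volume (ball x₀ ρ) ^ (1 - 1 / r) * volume (ball x₀ (2 ^ (j + 1) * ρ)) ^ (1 / r)
  have hc0 : c ≠ 0 := mul_ne_zero (mul_ne_zero (ofReal_pos.2 (by positivity)).ne'
    (rpow_pos hB measure_ball_lt_top.ne).ne') (rpow_pos hBj measure_ball_lt_top.ne).ne'
  have hctop : c ≠ ∞ := mul_ne_top (mul_ne_top ofReal_ne_top
    (rpow_ne_top_of_ne_zero hB.ne' measure_ball_lt_top.ne))
    (rpow_ne_top_of_ne_zero hBj.ne' measure_ball_lt_top.ne)
  refine rpow_tentInt_le_of_slice_le hr0 hctop ?_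
  filter_upwards [hmean, ae_restrict_mem measurableSet_Ioi] with t hmt ht
  by_cases hfin : ∫⁻ z, ‖A z t‖ₑ ^ r = ∞
  · rw [hfin, mul_top (rpow_pos (pos_iff_ne_zero.2 hc0) hctop).ne']
    exact le_top
  exact lintegral_slice_annulus_le hr hδ hCK.le hsmooth hrep (hA.comp measurable_prodMk_right)
    hfin hmt hρ ht (hsupp · t) hj

end Operator

theorem volume_ball_mul (x : Rn n) {a ρ : ℝ} (ha : 0 < a) (hρ : 0 < ρ) :
    volume (ball x (a * ρ)) = ENNReal.ofReal (a ^ n) * volume (ball x ρ) := by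
  rw [Measure.addHaar_ball_of_pos _ _ (mul_pos ha hρ), Measure.addHaar_ball_of_pos _ _ hρ,
    finrank_euclideanSpace_fin, mul_pow, ofReal_mul (by positivity), mul_assoc]

theorem volume_ball_rpow_eq (x : Rn n) {a ρ : ℝ} (ha : 0 < a) (hρ : 0 < ρ) (s : ℝ) :
    volume (ball x ρ) ^ s = ENNReal.ofReal (a ^ n) ^ (-s) * volume (ball x (a * ρ)) ^ s := by
  rw [volume_ball_mul x ha hρ, mul_rpow_of_ne_top ofReal_ne_top measure_ball_lt_top.ne,
    ← mul_assoc, ← rpow_add _ _ (ofReal_pos.2 (pow_pos ha n)).ne' ofReal_ne_top, neg_add_cancel,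
    rpow_zero, one_mul]

theorem annulus_scalar_eq (CK δ q : ℝ) {ρ : ℝ} (hρ : 0 < ρ) (n j : ℕ) :
    CK * ρ ^ δ / (2 ^ j * ρ / 2) ^ ((n : ℝ) + δ) * ρ ^ n * (((2 : ℝ) ^ (j + 1)) ^ n) ^ (1 / q) =
      CK * 2 ^ (2 * ((n : ℝ) + δ)) * 2 ^ (-((j : ℝ) + 1) * ((n : ℝ) + δ - n / q)) := by
  have hD : (2 : ℝ) ^ j * ρ / 2 = 2 ^ ((j : ℝ) - 1) * ρ := by
    rw [Real.rpow_sub two_pos, Real.rpow_one, Real.rpow_natCast]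
    ring
  have hρpow : ρ ^ ((n : ℝ) + δ) = ρ ^ δ * ρ ^ n := by
    rw [Real.rpow_add hρ, Real.rpow_natCast]
    ring
  have h2pow : (((2 : ℝ) ^ (j + 1)) ^ n) ^ (1 / q) = 2 ^ (2 * ((n : ℝ) + δ)) *
      2 ^ (-((j : ℝ) + 1) * ((n : ℝ) + δ - n / q)) * 2 ^ (((j : ℝ) - 1) * ((n : ℝ) + δ)) := by
    rw [← pow_mul, ← Real.rpow_natCast, ← Real.rpow_mul zero_le_two, ← Real.rpow_add two_pos,
      ← Real.rpow_add two_pos]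
    congr 1
    push_cast
    ring
  rw [hD, Real.mul_rpow (by positivity) hρ.le, ← Real.rpow_mul zero_le_two, hρpow, h2pow]
  field_simp

theorem annulus_factor_eq {CK : ℝ} (hCK : 0 ≤ CK) (δ q r : ℝ) {ρ : ℝ} (hρ : 0 < ρ) (x₀ : Rn n)
    (j : ℕ) :
    ENNReal.ofReal (CK * ρ ^ δ / (2 ^ j * ρ / 2) ^ ((n : ℝ) + δ)) *
        volume (ball x₀ ρ) ^ (1 - 1 / r) * volume (ball x₀ (2 ^ (j + 1) * ρ)) ^ (1 / r) *
        volume (ball x₀ ρ) ^ (1 / r - 1 / q) =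
      ENNReal.ofReal (CK * 2 ^ (2 * ((n : ℝ) + δ))) * volume (ball (0 : Rn n) 1) *
        ENNReal.ofReal (2 ^ (-((j : ℝ) + 1) * ((n : ℝ) + δ - n / q))) *
        volume (ball x₀ (2 ^ (j + 1) * ρ)) ^ (1 / r - 1 / q) := by
  set V := volume (ball x₀ ρ)
  set Vj := volume (ball x₀ (2 ^ (j + 1) * ρ))
  set a : ℝ := ((2 : ℝ) ^ (j + 1)) ^ n
  have hV0 : V ≠ 0 := (measure_ball_pos _ _ hρ).ne'
  have hVtop : V ≠ ∞ := measure_ball_lt_top.ne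
  have hVj0 : Vj ≠ 0 := (measure_ball_pos _ _ (by positivity)).ne'
  have hVjtop : Vj ≠ ∞ := measure_ball_lt_top.ne
  have hVjq : Vj ^ (1 / q) = ENNReal.ofReal a ^ (1 / q) * V ^ (1 / q) := by
    have : Vj = ENNReal.ofReal a * V := volume_ball_mul x₀ (by positivity) hρ
    rw [this, mul_rpow_of_ne_top ofReal_ne_top hVtop]
  have hVj : Vj ^ (1 / r) = Vj ^ (1 / q) * Vj ^ (1 / r - 1 / q) := by
    rw [← rpow_add _ _ hVj0 hVjtop, add_sub_cancel]
  have hV : V ^ (1 - 1 / r) * V ^ (1 / r - 1 / q) * V ^ (1 / q) = V := by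
    rw [← rpow_add _ _ hV0 hVtop, ← rpow_add _ _ hV0 hVtop,
      show 1 - 1 / r + (1 / r - 1 / q) + 1 / q = 1 by ring, rpow_one]
  have hVball : V = ENNReal.ofReal (ρ ^ n) * volume (ball (0 : Rn n) 1) := by
    simpa only [finrank_euclideanSpace_fin] using Measure.addHaar_ball_of_pos volume x₀ hρ
  calc _ = ENNReal.ofReal (CK * ρ ^ δ / (2 ^ j * ρ / 2) ^ ((n : ℝ) + δ)) *
        (V ^ (1 - 1 / r) * V ^ (1 / r - 1 / q) * V ^ (1 / q)) * ENNReal.ofReal a ^ (1 / q) *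
        Vj ^ (1 / r - 1 / q) := by
        rw [hVj, hVjq]
        ring
    _ = ENNReal.ofReal (CK * ρ ^ δ / (2 ^ j * ρ / 2) ^ ((n : ℝ) + δ) * ρ ^ n * a ^ (1 / q)) *
        volume (ball (0 : Rn n) 1) * Vj ^ (1 / r - 1 / q) := by
        rw [hV, hVball, ofReal_mul (by positivity), ofReal_mul (by positivity),
          ofReal_rpow_of_pos (by positivity)]
        ring
    _ = _ := by
        rw [annulus_scalar_eq CK δ q hρ n j, ofReal_mul (by positivity)]
        ring

theorem stmt8_general (n : ℕ) (q r δ : ℝ) (hr : 1 < r) (hδ0 : 0 < δ)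
    (K : Rn n → Rn n → ℝ) (T : (Rn n → ℝ) → Rn n → ℝ) (CK : ℝ) (hCK : 0 < CK)
    (hsmooth : ∀ x y z : Rn n, dist x y > 2 * dist y z →
      |K x y - K x z| ≤ CK * dist y z ^ δ / dist x y ^ ((n : ℝ) + δ))
    (hLr : ∀ f : Rn n → ℝ, MemLp f (ENNReal.ofReal r) volume →
      eLpNorm (T f) (ENNReal.ofReal r) volume ≤
        ENNReal.ofReal CK * eLpNorm f (ENNReal.ofReal r) volume)
    (hrep : ∀ f : Rn n → ℝ, MemLp f (ENNReal.ofReal r) volume →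
      ∀ x, x ∉ tsupport f → T f x = ∫ y, K x y * f y) :
    ∃ C : ℝ≥0∞, 0 < C ∧ C ≠ ∞ ∧ ∀ (x₀ : Rn n) (ρ : ℝ), 0 < ρ →
      ∀ (A : Rn n → ℝ → ℝ), Measurable (Function.uncurry A) →
      (∀ y t, A y t ≠ 0 → (y, t) ∈ tent x₀ ρ) →
      (tentInt r A Set.univ) ^ (1 / r) ≤ (volume (ball x₀ ρ)) ^ (1 / r - 1 / q) →
      (∀ᵐ t ∂(volume.restrict (Ioi (0 : ℝ))), (∫ x, A x t) = 0) →
      (tentInt r (fun y t => T (fun z => A z t) y) (tent x₀ (4 * ρ))) ^ (1 / r) ≤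
          C * (volume (ball x₀ (4 * ρ))) ^ (1 / r - 1 / q) ∧
      (∀ j : ℕ, 2 ≤ j →
        (tentInt r (fun y t => T (fun z => A z t) y)
            (tent x₀ ((2 : ℝ) ^ (j + 1) * ρ) \ tent x₀ ((2 : ℝ) ^ j * ρ))) ^ (1 / r) ≤
          C * ENNReal.ofReal ((2 : ℝ) ^ (-((j : ℝ) + 1) * ((n : ℝ) + δ - n / q))) *
            (volume (ball x₀ ((2 : ℝ) ^ (j + 1) * ρ))) ^ (1 / r - 1 / q)) := by
  set C₁ := ENNReal.ofReal CK * ENNReal.ofReal (4 ^ n) ^ (-(1 / r - 1 / q))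
  set C₂ := ENNReal.ofReal (CK * 2 ^ (2 * ((n : ℝ) + δ))) * volume (ball (0 : Rn n) 1)
  have hC₁ : 0 < C₁ := mul_pos (ofReal_pos.2 hCK).ne'
    (rpow_pos (ofReal_pos.2 (by positivity)) ofReal_ne_top).ne'
  have hC₁top : C₁ ≠ ∞ := mul_ne_top ofReal_ne_top
    (rpow_ne_top_of_ne_zero (ofReal_pos.2 (by positivity)).ne' ofReal_ne_top)
  have hC₂top : C₂ ≠ ∞ := mul_ne_top ofReal_ne_top measure_ball_lt_top.ne
  refine ⟨max C₁ C₂, lt_max_of_lt_left hC₁, max_ne_top hC₁top hC₂top,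
    fun x₀ ρ hρ A hA hsupp hsize hmean => ⟨?_, fun j hj => ?_⟩⟩
  · calc _ ≤ ENNReal.ofReal CK * tentInt r A univ ^ (1 / r) :=
          rpow_tentInt_slicewise_le (one_pos.trans hr) hCK hLr hA _
      _ ≤ ENNReal.ofReal CK * volume (ball x₀ ρ) ^ (1 / r - 1 / q) := by gcongr
      _ = C₁ * volume (ball x₀ (4 * ρ)) ^ (1 / r - 1 / q) := by
          rw [volume_ball_rpow_eq x₀ four_pos hρ, mul_assoc]
      _ ≤ _ := by gcongr; exact le_max_left _ _
  · calc _ ≤ _ := rpow_tentInt_annulus_le hr hδ0.le hCK hsmooth hrep hA hρ hsupp hmean hj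
      _ ≤ _ := by gcongr
      _ = C₂ * _ * _ := annulus_factor_eq hCK.le δ q r hρ x₀ j
      _ ≤ _ := by gcongr; exact le_max_right _ _

/-- a Calderón–Zygmund operator maps `𝔗^q_r` atoms to `T^q_r` molecules with
decay exponent `ε = n + δ - n/q`. -/
theorem stmt8 (n : ℕ) (q r δ : ℝ) (hr : 1 < r) (hδ0 : 0 < δ) (hδ1 : δ ≤ 1)
    (hq : (n : ℝ) / (n + δ) < q) (hq1 : q ≤ 1)
    (K : Rn n → Rn n → ℝ) (T : (Rn n → ℝ) → Rn n → ℝ) (CK : ℝ) (hCK : 0 < CK)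
    (hsmooth : ∀ x y z : Rn n, dist x y > 2 * dist y z →
      |K x y - K x z| ≤ CK * dist y z ^ δ / dist x y ^ ((n : ℝ) + δ))
    (hLr : ∀ f : Rn n → ℝ, MemLp f (ENNReal.ofReal r) volume →
      eLpNorm (T f) (ENNReal.ofReal r) volume ≤
        ENNReal.ofReal CK * eLpNorm f (ENNReal.ofReal r) volume)
    (hTtent : ∀ F : Rn n → ℝ → ℝ, Measurable (Function.uncurry F) →
      tentNorm r r (enn (fun y t => T (fun z => F z t) y)) ≤
        ENNReal.ofReal CK * tentNorm r r (enn F))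
    (hrep : ∀ f : Rn n → ℝ, MemLp f (ENNReal.ofReal r) volume →
      ∀ x, x ∉ tsupport f → T f x = ∫ y, K x y * f y) :
    ∃ C : ℝ≥0∞, 0 < C ∧ C ≠ ∞ ∧ ∀ (x₀ : Rn n) (ρ : ℝ), 0 < ρ →
      ∀ (A : Rn n → ℝ → ℝ), Measurable (Function.uncurry A) →
      (∀ y t, A y t ≠ 0 → (y, t) ∈ tent x₀ ρ) →
      (tentInt r A Set.univ) ^ (1 / r) ≤ (volume (ball x₀ ρ)) ^ (1 / r - 1 / q) →
      (∀ᵐ t ∂(volume.restrict (Ioi (0 : ℝ))), (∫ x, A x t) = 0) →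
      (tentInt r (fun y t => T (fun z => A z t) y) (tent x₀ (4 * ρ))) ^ (1 / r) ≤
          C * (volume (ball x₀ (4 * ρ))) ^ (1 / r - 1 / q) ∧
      (∀ j : ℕ, 2 ≤ j →
        (tentInt r (fun y t => T (fun z => A z t) y)
            (tent x₀ ((2 : ℝ) ^ (j + 1) * ρ) \ tent x₀ ((2 : ℝ) ^ j * ρ))) ^ (1 / r) ≤
          C * ENNReal.ofReal ((2 : ℝ) ^ (-((j : ℝ) + 1) * ((n : ℝ) + δ - n / q))) *
            (volume (ball x₀ ((2 : ℝ) ^ (j + 1) * ρ))) ^ (1 / r - 1 / q)) :=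
  stmt8_general n q r δ hr hδ0 K T CK hCK hsmooth hLr hrep
end
end

section
/- Let 1 ≤ r < ∞, 0 < p < ∞, and t > 0. Define i_t(f)(x,s) = f(x)·1_{[t,et]}(s) and π_t(G)(x) = ∫_t^{et} G(x,s) ds/s. Then π_t ∘ i_t = Id on functions on ℝⁿ; moreover i_t maps the slice-space (E^p_r)_t boundedly into the tent space T^p_r and π_t maps T^p_r boundedly into (E^p_r)_t, with operator norms bounded by constants depending only on n, p, r (uniform in t). In particular (E^p_r)_t is a retract of T^p_r. -/
/-!
Both maps only see the slab `ℝⁿ × [t, e t]`, on which `ds/s` is a probability measure and the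
tent-space weight `s^{-n-1}` is comparable to `t^{-n-1}`.

For `π_t`, Jensen's inequality for `ds/s` and Tonelli bound the slice average of `|π_t G|^r`
at `x` by a constant times `A_r(G)(x)^r`, because `B(x, t) ⊆ B(x, s)` on the slab.

For `i_t`, `A_r(i_t f)(x)^r` is at most a constant times `t^{-n} ∫_{B(x, e t)} |f|^r`. Covering
`B(0, e)` by finitely many unit balls bounds this by a fixed number of translated slice averages
at scale `t`, and translation invariance of Lebesgue measure turns the `L^{p/r}` quasinorm of
their sum into a constant times the slice norm.
-/

open MeasureTheory Metric Set ENNReal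
open scoped NNReal

noncomputable section

variable {n : ℕ}

lemma le_exp_one_mul {t : ℝ} (ht : 0 ≤ t) : t ≤ Real.exp 1 * t :=
  le_mul_of_one_le_left ht (Real.one_le_exp zero_le_one)

lemma integrableOn_inv_Ioc_exp_one_mul {t : ℝ} (ht : 0 < t) :
    IntegrableOn (fun s : ℝ => s⁻¹) (Ioc t (Real.exp 1 * t)) :=
  (ContinuousOn.integrableOn_Icc
    (continuousOn_inv₀.mono fun s hs => (ht.trans_le hs.1).ne')).mono_set Ioc_subset_Icc_self

lemma integral_inv_Ioc_exp_one_mul {t : ℝ} (ht : 0 < t) :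
    ∫ s in Ioc t (Real.exp 1 * t), s⁻¹ = 1 := by
  rw [← intervalIntegral.integral_of_le (le_exp_one_mul ht.le),
    integral_inv_of_pos ht (by positivity), mul_div_cancel_right₀ _ ht.ne', Real.log_exp]

lemma lintegral_inv_Ioc_exp_one_mul {t : ℝ} (ht : 0 < t) :
    ∫⁻ s in Ioc t (Real.exp 1 * t), ENNReal.ofReal s⁻¹ = 1 := by
  rw [← ofReal_integral_eq_lintegral_ofReal (integrableOn_inv_Ioc_exp_one_mul ht)
    (ae_restrict_of_forall_mem measurableSet_Ioc fun s hs => inv_nonneg.2 (ht.trans hs.1).le),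
    integral_inv_Ioc_exp_one_mul ht, ENNReal.ofReal_one]

theorem piMap_iMap {t : ℝ} (ht : 0 < t) (f : Rn n → ℝ) : piMap t (iMap t f) = f := by
  funext x
  have h : ∀ s ∈ Ioc t (Real.exp 1 * t), iMap t f x s / s = f x * s⁻¹ := fun s hs => by
    rw [iMap, if_pos (Ioc_subset_Icc_self hs), div_eq_mul_inv]
  rw [piMap, setIntegral_congr_fun measurableSet_Ioc h, integral_const_mul,
    integral_inv_Ioc_exp_one_mul ht, mul_one]

lemma rpow_neg_natCast_sub_one {s : ℝ} (hs : 0 < s) (n : ℕ) :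
    s ^ (-(n : ℝ) - 1) = (s ^ (n + 1))⁻¹ := by
  rw [show -(n : ℝ) - 1 = -((n + 1 : ℕ) : ℝ) by push_cast; ring, Real.rpow_neg hs.le,
    Real.rpow_natCast]

lemma inv_le_pow_mul_rpow_neg_natCast_sub_one {s a : ℝ} (hs : 0 < s) (hsa : s ≤ a) (n : ℕ) :
    s⁻¹ ≤ a ^ n * s ^ (-(n : ℝ) - 1) := by
  rw [rpow_neg_natCast_sub_one hs, ← div_eq_mul_inv, le_div_iff₀ (by positivity), pow_succ,
    ← mul_assoc, mul_right_comm, inv_mul_cancel₀ hs.ne', one_mul]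
  exact pow_le_pow_left₀ hs.le hsa n

section Lebesgue

variable {α : Type*} [MeasurableSpace α] {μ : Measure α}

lemma rpow_lintegral_mul_le_lintegral_mul_rpow {f w : α → ℝ≥0∞} (hf : Measurable f)
    (hw : Measurable w) (hw1 : ∫⁻ a, w a ∂μ = 1) {r : ℝ} (hr : 1 ≤ r) :
    (∫⁻ a, w a * f a ∂μ) ^ r ≤ ∫⁻ a, w a * f a ^ r ∂μ := by
  have : IsProbabilityMeasure (μ.withDensity w) :=
    ⟨by rw [withDensity_apply _ MeasurableSet.univ, Measure.restrict_univ, hw1]⟩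
  have h := eLpNorm'_le_eLpNorm'_of_exponent_le zero_lt_one hr (μ.withDensity w)
    hf.aestronglyMeasurable
  simp only [eLpNorm', enorm_eq_self, ENNReal.rpow_one, div_one] at h
  rw [lintegral_withDensity_eq_lintegral_mul _ hw hf,
    lintegral_withDensity_eq_lintegral_mul _ hw (hf.pow_const r)] at h
  calc (∫⁻ a, w a * f a ∂μ) ^ r ≤ ((∫⁻ a, w a * f a ^ r ∂μ) ^ (1 / r)) ^ r :=
        ENNReal.rpow_le_rpow h (by linarith)
    _ = ∫⁻ a, w a * f a ^ r ∂μ := by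
        rw [← ENNReal.rpow_mul, one_div_mul_cancel (by linarith), ENNReal.rpow_one]

lemma lintegral_rpow_rpow_le_of_le_const_mul {a b : α → ℝ≥0∞} {K : ℝ≥0∞} (hK : K ≠ ∞)
    {q s : ℝ} (hq : 0 ≤ q) (hs : 0 ≤ s) (h : ∀ x, a x ≤ K * b x) :
    (∫⁻ x, a x ^ q ∂μ) ^ s ≤ K ^ (q * s) * (∫⁻ x, b x ^ q ∂μ) ^ s := by
  calc (∫⁻ x, a x ^ q ∂μ) ^ s ≤ (∫⁻ x, K ^ q * b x ^ q ∂μ) ^ s :=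
        ENNReal.rpow_le_rpow (lintegral_mono fun x =>
          (ENNReal.rpow_le_rpow (h x) hq).trans_eq (ENNReal.mul_rpow_of_nonneg _ _ hq)) hs
    _ = K ^ (q * s) * (∫⁻ x, b x ^ q ∂μ) ^ s := by
        rw [lintegral_const_mul' _ _ (ENNReal.rpow_ne_top_of_nonneg hq hK),
          ENNReal.mul_rpow_of_nonneg _ _ hs, ENNReal.rpow_mul]

lemma setLIntegral_biUnion_finset_le {ι : Type*} (F : Finset ι) (s : ι → Set α)
    (f : α → ℝ≥0∞) : ∫⁻ a in ⋃ i ∈ F, s i, f a ∂μ ≤ ∑ i ∈ F, ∫⁻ a in s i, f a ∂μ :=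
  calc ∫⁻ a in ⋃ i ∈ F, s i, f a ∂μ = ∫⁻ a in ⋃ i : F, s i, f a ∂μ := by
        rw [Set.iUnion_subtype]
    _ ≤ ∑' i : F, ∫⁻ a in s i, f a ∂μ := lintegral_iUnion_le _ _
    _ = ∑ i ∈ F, ∫⁻ a in s i, f a ∂μ := Finset.tsum_subtype F fun i => ∫⁻ a in s i, f a ∂μ

lemma measurable_setLIntegral_ball [PseudoMetricSpace α] [OpensMeasurableSpace α]
    [SecondCountableTopology α] [SFinite μ] {h : α → ℝ≥0∞} (hh : Measurable h) (ρ : ℝ) :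
    Measurable fun z => ∫⁻ y in ball z ρ, h y ∂μ := by
  have e : (fun z => ∫⁻ y in ball z ρ, h y ∂μ)
      = fun z => ∫⁻ y, {q : α × α | dist q.2 q.1 < ρ}.indicator (fun q => h q.2) (z, y) ∂μ := by
    funext z
    rw [← lintegral_indicator measurableSet_ball]
    rfl
  rw [e]
  exact ((hh.comp measurable_snd).indicator
    (measurableSet_lt (by fun_prop) measurable_const)).lintegral_prod_right'

end Lebesgue

lemma finset_sum_rpow_le_card_rpow_mul_sum_rpow {ι : Type*} (F : Finset ι) (a : ι → ℝ≥0∞)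
    {q : ℝ} (hq : 0 < q) : (∑ i ∈ F, a i) ^ q ≤ (F.card : ℝ≥0∞) ^ q * ∑ i ∈ F, a i ^ q := by
  rcases F.eq_empty_or_nonempty with rfl | hne
  · simp [ENNReal.zero_rpow_of_pos hq]
  obtain ⟨i₀, hi₀, hmax⟩ := Finset.exists_mem_eq_sup F hne a
  calc (∑ i ∈ F, a i) ^ q ≤ ((F.card : ℝ≥0∞) * a i₀) ^ q := by
        refine ENNReal.rpow_le_rpow ?_ hq.le
        rw [← nsmul_eq_mul]
        exact Finset.sum_le_card_nsmul F a (a i₀) fun i hi => hmax ▸ Finset.le_sup hi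
    _ = (F.card : ℝ≥0∞) ^ q * a i₀ ^ q := ENNReal.mul_rpow_of_nonneg _ _ hq.le
    _ ≤ (F.card : ℝ≥0∞) ^ q * ∑ i ∈ F, a i ^ q :=
        mul_le_mul_right (Finset.single_le_sum (f := fun i => a i ^ q) (fun i _ => zero_le) hi₀) _

lemma lintegral_sum_translate_rpow_le {G ι : Type*} [AddGroup G] [MeasurableSpace G]
    [MeasurableAdd G] {μ : Measure G} [μ.IsAddRightInvariant] {g : G → ℝ≥0∞} (hg : Measurable g)
    (F : Finset ι) (w : ι → G) {q : ℝ} (hq : 0 < q) :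
    ∫⁻ x, (∑ i ∈ F, g (x + w i)) ^ q ∂μ
      ≤ (F.card : ℝ≥0∞) ^ q * F.card * ∫⁻ x, g x ^ q ∂μ :=
  calc ∫⁻ x, (∑ i ∈ F, g (x + w i)) ^ q ∂μ
      ≤ ∫⁻ x, (F.card : ℝ≥0∞) ^ q * ∑ i ∈ F, g (x + w i) ^ q ∂μ :=
        lintegral_mono fun x => finset_sum_rpow_le_card_rpow_mul_sum_rpow F _ hq
    _ = (F.card : ℝ≥0∞) ^ q * ∑ i ∈ F, ∫⁻ x, g (x + w i) ^ q ∂μ := by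
        rw [lintegral_const_mul' _ _ (ENNReal.rpow_ne_top_of_nonneg hq.le (natCast_ne_top _)),
          lintegral_finsetSum' F fun i _ => (show Measurable fun x => g (x + w i) ^ q from
            (hg.comp (measurable_add_const (w i))).pow_const q).aemeasurable]
    _ = (F.card : ℝ≥0∞) ^ q * F.card * ∫⁻ x, g x ^ q ∂μ := by
        simp_rw [lintegral_add_right_eq_self (fun x => g x ^ q), Finset.sum_const, nsmul_eq_mul,
          mul_assoc]

lemma exists_finset_ball_subset_biUnion_ball {E : Type*} [NormedAddCommGroup E] [NormedSpace ℝ E]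
    [ProperSpace E] (R : ℝ) :
    ∃ F : Finset E, ∀ (x : E) {t : ℝ}, 0 < t → ball x (R * t) ⊆ ⋃ v ∈ F, ball (x + t • v) t := by
  obtain ⟨s, -, hs, hcover⟩ :=
    finite_cover_balls_of_compact (isCompact_closedBall (0 : E) R) one_pos
  refine ⟨hs.toFinset, fun x t ht y hy => ?_⟩
  have hz : t⁻¹ • (y - x) ∈ closedBall (0 : E) R := by
    rw [mem_ball, dist_eq_norm] at hy
    rw [mem_closedBall_zero_iff, norm_smul, norm_inv, Real.norm_of_nonneg ht.le,
      inv_mul_le_iff₀ ht]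
    linarith
  obtain ⟨v, hv, hzv⟩ := mem_iUnion₂.mp (hcover hz)
  refine mem_iUnion₂.mpr ⟨v, hs.mem_toFinset.mpr hv, ?_⟩
  rw [mem_ball, dist_eq_norm] at hzv ⊢
  have e : y - (x + t • v) = t • (t⁻¹ • (y - x) - v) := by
    rw [smul_sub, smul_inv_smul₀ ht.ne']
    abel
  rw [e, norm_smul, Real.norm_of_nonneg ht.le]
  exact mul_lt_of_lt_one_right ht hzv

lemma volume_ball_eq (x : Rn n) {t : ℝ} (ht : 0 < t) :
    volume (ball x t) = ENNReal.ofReal (t ^ n) * volume (ball (0 : Rn n) 1) := by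
  rw [Measure.addHaar_ball_of_pos volume x ht, finrank_euclideanSpace_fin]

lemma conical_rpow {r : ℝ} (hr : r ≠ 0) (G : Rn n → ℝ → ℝ≥0∞) (x : Rn n) :
    conical r G x ^ r = ∫⁻ t in Ioi (0 : ℝ),
      (∫⁻ y in ball x t, (G y t) ^ r) * ENNReal.ofReal (t ^ (-(n : ℝ) - 1)) := by
  rw [conical, ← ENNReal.rpow_mul, one_div_mul_cancel hr, ENNReal.rpow_one]

lemma tentNorm_eq {r : ℝ} (hr : r ≠ 0) (q : ℝ) (G : Rn n → ℝ → ℝ≥0∞) :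
    tentNorm q r G = (∫⁻ x, (conical r G x ^ r) ^ (q / r)) ^ (1 / q) := by
  simp_rw [tentNorm, ← ENNReal.rpow_mul, mul_div_cancel₀ q hr]

def sliceAvg (r t : ℝ) (f : Rn n → ℝ) (x : Rn n) : ℝ≥0∞ :=
  (volume (ball x t))⁻¹ * ∫⁻ y in ball x t, (‖f y‖₊ : ℝ≥0∞) ^ r

lemma sliceNorm_eq (p r t : ℝ) (f : Rn n → ℝ) :
    sliceNorm p r t f = (∫⁻ x, sliceAvg r t f x ^ (p / r)) ^ (1 / p) := rfl

lemma setLIntegral_ball_eq_mul_sliceAvg {r t : ℝ} (ht : 0 < t) (f : Rn n → ℝ) (x : Rn n) :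
    ∫⁻ y in ball x t, (‖f y‖₊ : ℝ≥0∞) ^ r
      = ENNReal.ofReal (t ^ n) * volume (ball (0 : Rn n) 1) * sliceAvg r t f x := by
  rw [sliceAvg, ← mul_assoc, ← volume_ball_eq x ht,
    ENNReal.mul_inv_cancel (measure_ball_pos _ _ ht).ne' measure_ball_lt_top.ne, one_mul]

lemma measurable_sliceAvg {r t : ℝ} (ht : 0 < t) {f : Rn n → ℝ} (hf : Measurable f) :
    Measurable (sliceAvg r t f) := by
  have e : sliceAvg r t f = fun x => (ENNReal.ofReal (t ^ n) * volume (ball (0 : Rn n) 1))⁻¹ *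
      ∫⁻ y in ball x t, (‖f y‖₊ : ℝ≥0∞) ^ r := by
    funext x
    rw [sliceAvg, volume_ball_eq x ht]
  rw [e]
  exact (measurable_setLIntegral_ball (by fun_prop) t).const_mul _

lemma conical_iMap_rpow_le {r t : ℝ} (hr : 0 < r) (ht : 0 < t) (f : Rn n → ℝ) (x : Rn n) :
    conical r (enn (iMap t f)) x ^ r
      ≤ ENNReal.ofReal ((Real.exp 1 - 1) * (t ^ n)⁻¹) *
        ∫⁻ y in ball x (Real.exp 1 * t), (‖f y‖₊ : ℝ≥0∞) ^ r := by
  set B := (∫⁻ y in ball x (Real.exp 1 * t), (‖f y‖₊ : ℝ≥0∞) ^ r) *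
    ENNReal.ofReal (t ^ (-(n : ℝ) - 1))
  have hslice : ∀ s, (∫⁻ y in ball x s, enn (iMap t f) y s ^ r) *
      ENNReal.ofReal (s ^ (-(n : ℝ) - 1)) ≤ (Icc t (Real.exp 1 * t)).indicator (fun _ => B) s := by
    intro s
    by_cases hs : s ∈ Icc t (Real.exp 1 * t)
    · rw [indicator_of_mem hs]
      simp only [enn, iMap, if_pos hs]
      exact mul_le_mul' (lintegral_mono_set (ball_subset_ball hs.2))
        (ENNReal.ofReal_le_ofReal (Real.rpow_le_rpow_of_nonpos ht hs.1 (by linarith)))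
    · simp [enn, iMap, hs, ENNReal.zero_rpow_of_pos hr]
  calc conical r (enn (iMap t f)) x ^ r
      ≤ ∫⁻ s, (Icc t (Real.exp 1 * t)).indicator (fun _ => B) s := by
        rw [conical_rpow hr.ne']
        exact (lintegral_mono hslice).trans (setLIntegral_le_lintegral _ _)
    _ = B * ENNReal.ofReal (Real.exp 1 * t - t) := by
        rw [lintegral_indicator measurableSet_Icc, setLIntegral_const, Real.volume_Icc]
    _ = _ := by
        have e : ENNReal.ofReal (t ^ (-(n : ℝ) - 1)) * ENNReal.ofReal (Real.exp 1 * t - t)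
            = ENNReal.ofReal ((Real.exp 1 - 1) * (t ^ n)⁻¹) := by
          rw [← ENNReal.ofReal_mul (Real.rpow_nonneg ht.le _), rpow_neg_natCast_sub_one ht,
            pow_succ]
          congr 1
          field_simp
        rw [mul_assoc, e, mul_comm]

lemma conical_iMap_rpow_le_sum_sliceAvg {r t : ℝ} (hr : 0 < r) (ht : 0 < t) (f : Rn n → ℝ)
    (x : Rn n) {F : Finset (Rn n)} (hF : ball x (Real.exp 1 * t) ⊆ ⋃ v ∈ F, ball (x + t • v) t) :
    conical r (enn (iMap t f)) x ^ r
      ≤ ENNReal.ofReal (Real.exp 1 - 1) * volume (ball (0 : Rn n) 1) *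
        ∑ v ∈ F, sliceAvg r t f (x + t • v) := by
  have hcancel : ENNReal.ofReal ((Real.exp 1 - 1) * (t ^ n)⁻¹) * ENNReal.ofReal (t ^ n)
      = ENNReal.ofReal (Real.exp 1 - 1) := by
    rw [← ENNReal.ofReal_mul (mul_nonneg (sub_nonneg.2 (Real.one_le_exp zero_le_one))
      (by positivity)), inv_mul_cancel_right₀ (pow_pos ht n).ne']
  calc conical r (enn (iMap t f)) x ^ r
      ≤ ENNReal.ofReal ((Real.exp 1 - 1) * (t ^ n)⁻¹) *
        ∫⁻ y in ball x (Real.exp 1 * t), (‖f y‖₊ : ℝ≥0∞) ^ r := conical_iMap_rpow_le hr ht f x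
    _ ≤ ENNReal.ofReal ((Real.exp 1 - 1) * (t ^ n)⁻¹) *
        ∑ v ∈ F, ∫⁻ y in ball (x + t • v) t, (‖f y‖₊ : ℝ≥0∞) ^ r :=
        mul_le_mul_right ((lintegral_mono_set hF).trans (setLIntegral_biUnion_finset_le _ _ _)) _
    _ = _ := by
        simp_rw [setLIntegral_ball_eq_mul_sliceAvg ht, mul_assoc, ← Finset.mul_sum, ← mul_assoc,
          hcancel]

theorem exists_tentNorm_iMap_le {p r : ℝ} (hr : 0 < r) (hp : 0 < p) :
    ∃ C : ℝ≥0∞, C ≠ ∞ ∧ ∀ t : ℝ, 0 < t → ∀ f : Rn n → ℝ, Measurable f →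
      tentNorm p r (enn (iMap t f)) ≤ C * sliceNorm p r t f := by
  obtain ⟨F, hF⟩ := exists_finset_ball_subset_biUnion_ball (E := Rn n) (Real.exp 1)
  set K := ENNReal.ofReal (Real.exp 1 - 1) * volume (ball (0 : Rn n) 1)
  set N : ℝ≥0∞ := (F.card : ℝ≥0∞)
  have hK : K ≠ ∞ := ENNReal.mul_ne_top ofReal_ne_top measure_ball_lt_top.ne
  have hN : N ≠ ∞ := natCast_ne_top _
  refine ⟨K ^ (p / r * (1 / p)) * (N ^ (p / r) * N) ^ (1 / p), ?_, fun t ht f hf => ?_⟩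
  · exact ENNReal.mul_ne_top (ENNReal.rpow_ne_top_of_nonneg (by positivity) hK)
      (ENNReal.rpow_ne_top_of_nonneg (by positivity)
        (ENNReal.mul_ne_top (ENNReal.rpow_ne_top_of_nonneg (by positivity) hN) hN))
  calc tentNorm p r (enn (iMap t f))
      ≤ K ^ (p / r * (1 / p)) *
        (∫⁻ x, (∑ v ∈ F, sliceAvg r t f (x + t • v)) ^ (p / r)) ^ (1 / p) := by
        rw [tentNorm_eq hr.ne']
        exact lintegral_rpow_rpow_le_of_le_const_mul hK (by positivity) (by positivity)
          fun x => conical_iMap_rpow_le_sum_sliceAvg hr ht f x (hF x ht)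
    _ ≤ K ^ (p / r * (1 / p)) * (N ^ (p / r) * N * ∫⁻ x, sliceAvg r t f x ^ (p / r)) ^ (1 / p) := by
        gcongr
        exact lintegral_sum_translate_rpow_le (measurable_sliceAvg ht hf) F _ (by positivity)
    _ = _ := by
        rw [ENNReal.mul_rpow_of_nonneg (N ^ (p / r) * N) _ (by positivity), ← mul_assoc,
          sliceNorm_eq]

lemma enorm_piMap_rpow_le {r t : ℝ} (hr : 1 ≤ r) (ht : 0 < t) {G : Rn n → ℝ → ℝ}
    (hG : Measurable (Function.uncurry G)) (y : Rn n) :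
    (‖piMap t G y‖₊ : ℝ≥0∞) ^ r
      ≤ ∫⁻ s in Ioc t (Real.exp 1 * t), ENNReal.ofReal s⁻¹ * (‖G y s‖₊ : ℝ≥0∞) ^ r := by
  have hle : (‖piMap t G y‖₊ : ℝ≥0∞)
      ≤ ∫⁻ s in Ioc t (Real.exp 1 * t), ENNReal.ofReal s⁻¹ * (‖G y s‖₊ : ℝ≥0∞) := by
    refine (enorm_integral_le_lintegral_enorm _).trans_eq
      (setLIntegral_congr_fun measurableSet_Ioc fun s hs => ?_)
    rw [div_eq_mul_inv, enorm_mul, Real.enorm_eq_ofReal (inv_nonneg.2 (ht.trans hs.1).le),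
      mul_comm]
    rfl
  exact (ENNReal.rpow_le_rpow hle (by linarith)).trans
    (rpow_lintegral_mul_le_lintegral_mul_rpow
      (hG.comp measurable_prodMk_left).nnnorm.coe_nnreal_ennreal measurable_inv.ennreal_ofReal
      (lintegral_inv_Ioc_exp_one_mul ht) hr)

lemma setLIntegral_ball_piMap_rpow_le {r t : ℝ} (hr : 1 ≤ r) (ht : 0 < t) {G : Rn n → ℝ → ℝ}
    (hG : Measurable (Function.uncurry G)) (x : Rn n) :
    ∫⁻ y in ball x t, (‖piMap t G y‖₊ : ℝ≥0∞) ^ r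
      ≤ ENNReal.ofReal ((Real.exp 1 * t) ^ n) * conical r (enn G) x ^ r := by
  rw [conical_rpow (by linarith)]
  calc ∫⁻ y in ball x t, (‖piMap t G y‖₊ : ℝ≥0∞) ^ r
      ≤ ∫⁻ y in ball x t, ∫⁻ s in Ioc t (Real.exp 1 * t),
          ENNReal.ofReal s⁻¹ * (‖G y s‖₊ : ℝ≥0∞) ^ r :=
        lintegral_mono fun y => enorm_piMap_rpow_le hr ht hG y
    _ = ∫⁻ s in Ioc t (Real.exp 1 * t),
          ENNReal.ofReal s⁻¹ * ∫⁻ y in ball x t, (‖G y s‖₊ : ℝ≥0∞) ^ r := by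
        rw [lintegral_lintegral_swap (by fun_prop)]
        exact lintegral_congr fun s => lintegral_const_mul' _ _ ofReal_ne_top
    _ ≤ ∫⁻ s in Ioc t (Real.exp 1 * t), ENNReal.ofReal ((Real.exp 1 * t) ^ n) *
          ((∫⁻ y in ball x s, enn G y s ^ r) * ENNReal.ofReal (s ^ (-(n : ℝ) - 1))) := by
        refine setLIntegral_mono' measurableSet_Ioc fun s hs => ?_
        have hs0 : 0 < s := ht.trans hs.1
        rw [mul_comm (∫⁻ y in ball x s, _), ← mul_assoc, ← ENNReal.ofReal_mul (by positivity)]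
        exact mul_le_mul' (ENNReal.ofReal_le_ofReal
          (inv_le_pow_mul_rpow_neg_natCast_sub_one hs0 hs.2 n))
          (lintegral_mono_set (ball_subset_ball hs.1.le))
    _ ≤ _ := by
        rw [lintegral_const_mul' _ _ ofReal_ne_top]
        exact mul_le_mul_right (lintegral_mono' (Measure.restrict_mono
          (fun s hs => ht.trans hs.1) le_rfl) le_rfl) _

lemma sliceAvg_piMap_le {r t : ℝ} (hr : 1 ≤ r) (ht : 0 < t) {G : Rn n → ℝ → ℝ}
    (hG : Measurable (Function.uncurry G)) (x : Rn n) :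
    sliceAvg r t (piMap t G) x
      ≤ (volume (ball (0 : Rn n) 1))⁻¹ * ENNReal.ofReal (Real.exp 1 ^ n) *
        conical r (enn G) x ^ r := by
  have htn : ENNReal.ofReal (t ^ n) ≠ 0 := (ENNReal.ofReal_pos.2 (pow_pos ht n)).ne'
  rw [sliceAvg, volume_ball_eq x ht]
  calc (ENNReal.ofReal (t ^ n) * volume (ball (0 : Rn n) 1))⁻¹ *
        ∫⁻ y in ball x t, (‖piMap t G y‖₊ : ℝ≥0∞) ^ r
      ≤ (ENNReal.ofReal (t ^ n) * volume (ball (0 : Rn n) 1))⁻¹ *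
        (ENNReal.ofReal ((Real.exp 1 * t) ^ n) * conical r (enn G) x ^ r) :=
        mul_le_mul_right (setLIntegral_ball_piMap_rpow_le hr ht hG x) _
    _ = (volume (ball (0 : Rn n) 1))⁻¹ * ENNReal.ofReal (Real.exp 1 ^ n) *
        ((ENNReal.ofReal (t ^ n))⁻¹ * ENNReal.ofReal (t ^ n) * conical r (enn G) x ^ r) := by
        rw [mul_pow, ENNReal.ofReal_mul (by positivity),
          ENNReal.mul_inv (Or.inl htn) (Or.inl ofReal_ne_top)]
        ring
    _ = _ := by rw [ENNReal.inv_mul_cancel htn ofReal_ne_top, one_mul, mul_assoc]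

theorem sliceNorm_piMap_le {p r t : ℝ} (hr : 1 ≤ r) (hp : 0 < p) (ht : 0 < t)
    {G : Rn n → ℝ → ℝ} (hG : Measurable (Function.uncurry G)) :
    sliceNorm p r t (piMap t G)
      ≤ ((volume (ball (0 : Rn n) 1))⁻¹ * ENNReal.ofReal (Real.exp 1 ^ n)) ^ (1 / r) *
        tentNorm p r (enn G) := by
  have hK : (volume (ball (0 : Rn n) 1))⁻¹ * ENNReal.ofReal (Real.exp 1 ^ n) ≠ ∞ :=
    ENNReal.mul_ne_top (ENNReal.inv_ne_top.2 (measure_ball_pos _ _ one_pos).ne') ofReal_ne_top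
  have h := lintegral_rpow_rpow_le_of_le_const_mul (μ := volume) hK
    (q := p / r) (s := 1 / p) (by positivity) (by positivity) (sliceAvg_piMap_le hr ht hG)
  rwa [← sliceNorm_eq, ← tentNorm_eq (by positivity), show p / r * (1 / p) = 1 / r by
    field_simp] at h

/-- the slice-space `(E^p_r)_t` is a retract of the tent space `T^p_r` via
`i_t` and `π_t`, with bounds uniform in `t`. -/
theorem stmt12 (n : ℕ) (p r : ℝ) (hr : 1 ≤ r) (hp : 0 < p) :
    (∀ (t : ℝ), 0 < t → ∀ f : Rn n → ℝ, piMap t (iMap t f) = f) ∧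
    (∃ C : ℝ≥0∞, 0 < C ∧ C ≠ ∞ ∧
      (∀ (t : ℝ), 0 < t → ∀ f : Rn n → ℝ, Measurable f →
        tentNorm p r (enn (iMap t f)) ≤ C * sliceNorm p r t f) ∧
      (∀ (t : ℝ), 0 < t → ∀ G : Rn n → ℝ → ℝ, Measurable (Function.uncurry G) →
        sliceNorm p r t (piMap t G) ≤ C * tentNorm p r (enn G))) := by
  obtain ⟨Ci, hCi, hiMap⟩ := exists_tentNorm_iMap_le (n := n) (r := r) (by linarith) hp
  set Cπ := ((volume (ball (0 : Rn n) 1))⁻¹ * ENNReal.ofReal (Real.exp 1 ^ n)) ^ (1 / r)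
  have hCπ : Cπ ≠ ∞ := ENNReal.rpow_ne_top_of_nonneg (by positivity)
    (ENNReal.mul_ne_top (ENNReal.inv_ne_top.2 (measure_ball_pos _ _ one_pos).ne') ofReal_ne_top)
  refine ⟨fun t ht f => piMap_iMap ht f, Ci + Cπ + 1, zero_lt_one.trans_le le_add_self,
    by finiteness, fun t ht f hf => ?_, fun t ht G hG => ?_⟩
  · exact (hiMap t ht f hf).trans (mul_le_mul_left (le_add_right le_self_add) _)
  · exact (sliceNorm_piMap_le hr hp ht hG).trans (mul_le_mul_left (le_add_right le_add_self) _)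
end
end
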